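/- arXiv:2410.02357 — 9 statements merged into one kernel-verified Lean document; each statement's English description precedes it below -/
import Mathlib

section
/- Let α ∈ ℝ be irrational. Then there exists a constant C > 0 such that for every odd integer v, inf_{t ∈ [v−1, v+1]} |2 + e^{iπt} + e^{iπαt}| ≤ C · (min_{u odd} |vα − u|)². -/
/-!
Let `u` be the odd integer nearest to `vα` and `δ = vα - u`. Shifting `t = v` by `s = -δ/(1 + α)`
makes `t - v = s` and `αt - u = -s`, so `h(t) = 2 - 2 cos(πs) ≤ π²s² = π²δ²/(1 + α)²`. This shift
stays inside `[v - 1, v + 1]` as long as `|δ| ≤ |1 + α|`; otherwise `δ` is bounded below and the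
trivial bound `h ≤ 4` suffices.
-/

open Complex

/-- The nearest odd integer to `β` is `2 ⌊(β - 1)/2⌉ + 1`. -/
lemma exists_odd_isLeast_abs_sub (β : ℝ) :
    ∃ u : ℤ, Odd u ∧ IsLeast {x : ℝ | ∃ u : ℤ, Odd u ∧ x = |β - u|} |β - u| := by
  set k := round ((β - 1) / 2)
  have hdist (k' : ℤ) : |β - ((2 * k' + 1 : ℤ) : ℝ)| = 2 * |(β - 1) / 2 - k'| := by
    rw [show (2 : ℝ) * |(β - 1) / 2 - k'| = |2 * ((β - 1) / 2 - k')| by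
      rw [abs_mul, _root_.abs_two]]
    push_cast; ring_nf
  refine ⟨2 * k + 1, odd_two_mul_add_one k, ⟨_, odd_two_mul_add_one k, rfl⟩, ?_⟩
  rintro _ ⟨_, ⟨k', rfl⟩, rfl⟩
  rw [hdist, hdist]
  linarith [round_le ((β - 1) / 2) k']

lemma Complex.exp_pi_mul_odd_add_mul_I {n : ℤ} (hn : Odd n) (z : ℂ) :
    exp (Real.pi * (n + z) * I) = -exp (Real.pi * z * I) := by
  rw [show (Real.pi : ℂ) * (n + z) * I = n * (Real.pi * I) + Real.pi * z * I by ring,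
    exp_add, exp_int_mul, exp_pi_mul_I, hn.neg_one_zpow, neg_one_mul]

lemma Complex.norm_two_sub_exp_mul_I_sub_exp_neg_mul_I_le (x : ℝ) :
    ‖2 - exp (x * I) - exp (-x * I)‖ ≤ x ^ 2 := by
  have hreal : 2 - exp (x * I) - exp (-x * I) = ((2 - 2 * Real.cos x : ℝ) : ℂ) := by
    rw [sub_sub, ← two_cos]; push_cast; ring
  rw [hreal, norm_real, Real.norm_of_nonneg (by linarith [Real.cos_le_one x])]
  linarith [Real.one_sub_sq_div_two_le_cos (x := x)]

namespace OddApprox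

noncomputable def h (α t : ℝ) : ℝ :=
  ‖2 + exp (Real.pi * t * I) + exp (Real.pi * α * t * I)‖

lemma h_le_four (α t : ℝ) : h α t ≤ 4 := by
  calc h α t ≤ ‖(2 : ℂ)‖ + ‖exp ((Real.pi * t : ℝ) * I)‖ + ‖exp ((Real.pi * α * t : ℝ) * I)‖ := by
        unfold h; push_cast; exact norm_add₃_le
    _ = 4 := by rw [norm_exp_ofReal_mul_I, norm_exp_ofReal_mul_I]; norm_num

/-- The two exponentials are `-e^{iπs}` and `-e^{-iπs}`, so `h` vanishes to second order. -/
lemma h_odd_add_le {α s : ℝ} {v u : ℤ} (hv : Odd v) (hu : Odd u) (hαs : α * (v + s) = u - s) :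
    h α (v + s) ≤ (Real.pi * s) ^ 2 := by
  have hαs' : (α : ℂ) * (v + s) = u + (-s : ℂ) := by exact_mod_cast congrArg ofReal hαs
  have e1 := exp_pi_mul_odd_add_mul_I hv s
  have e2 := exp_pi_mul_odd_add_mul_I hu (-s)
  rw [← hαs', ← mul_assoc] at e2
  calc h α (v + s) = ‖2 - exp ((Real.pi * s : ℝ) * I) - exp (-(Real.pi * s : ℝ) * I)‖ := by
        unfold h; push_cast; rw [e1, e2]; ring_nf
    _ ≤ (Real.pi * s) ^ 2 := norm_two_sub_exp_mul_I_sub_exp_neg_mul_I_le _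

lemma iInf_h_le {α a b t : ℝ} (ht : t ∈ Set.Icc a b) :
    ⨅ t : Set.Icc a b, h α t ≤ h α t :=
  ciInf_le ⟨0, fun _ ⟨_, hx⟩ => hx ▸ norm_nonneg _⟩ (⟨t, ht⟩ : Set.Icc a b)

end OddApprox

/-- Upper bound: for irrational `α` there exists `C > 0` such that for every odd integer `v`,
`inf_{t ∈ [v-1, v+1]} |2 + e^{iπt} + e^{iπαt}| ≤ C · (min_{u odd} |vα - u|)²`. -/
theorem inf_h_le_oddApprox_sq (α : ℝ) (hα : Irrational α) :
    ∃ C : ℝ, 0 < C ∧ ∀ v : ℤ, Odd v →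
      (⨅ t : Set.Icc ((v : ℝ) - 1) ((v : ℝ) + 1),
          ‖2 + Complex.exp (Real.pi * (t : ℝ) * Complex.I)
            + Complex.exp (Real.pi * α * (t : ℝ) * Complex.I)‖)
        ≤ C * (sInf {x : ℝ | ∃ u : ℤ, Odd u ∧ x = |(v : ℝ) * α - (u : ℝ)|}) ^ 2 := by
  have hm : 0 < |1 + α| := abs_pos.2 fun h0 => hα.ne_int (-1) (by push_cast; linarith)
  refine ⟨(Real.pi ^ 2 + 4) / |1 + α| ^ 2, by positivity, fun v hv => ?_⟩
  obtain ⟨u, hu, hleast⟩ := exists_odd_isLeast_abs_sub (v * α)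
  rw [hleast.csInf_eq]
  change ⨅ t : Set.Icc ((v : ℝ) - 1) ((v : ℝ) + 1), OddApprox.h α t ≤ _
  set δ := (v : ℝ) * α - u
  by_cases hδ : |δ| ≤ |1 + α|
  · set s := -δ / (1 + α)
    have hs : |s| ≤ 1 := by rw [abs_div, abs_neg]; exact div_le_one_of_le₀ hδ hm.le
    have hαs : α * (v + s) = u - s := by
      have h1 : 1 + α ≠ 0 := abs_pos.1 hm
      simp only [s, δ]; field_simp; ring
    calc _ ≤ OddApprox.h α (v + s) :=
          OddApprox.iInf_h_le ⟨by linarith [neg_abs_le s], by linarith [le_abs_self s]⟩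
      _ ≤ (Real.pi * s) ^ 2 := OddApprox.h_odd_add_le hv hu hαs
      _ = Real.pi ^ 2 / |1 + α| ^ 2 * |δ| ^ 2 := by
        rw [sq_abs, sq_abs, div_mul_eq_mul_div, mul_pow, div_pow, neg_sq]; ring
      _ ≤ _ := by gcongr; linarith
  · calc _ ≤ OddApprox.h α v := OddApprox.iInf_h_le ⟨by linarith, by linarith⟩
      _ ≤ 4 := OddApprox.h_le_four α v
      _ ≤ 4 / |1 + α| ^ 2 * |δ| ^ 2 := by
        rw [div_mul_eq_mul_div, le_div_iff₀ (by positivity)]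
        nlinarith [abs_nonneg δ]
      _ ≤ _ := by gcongr; exact le_add_of_nonneg_left (sq_nonneg _)
end

section
/- Let α ∈ ℝ be irrational. Then there exists a constant c > 0 such that for every odd integer v, c · (min_{u odd} |vα − u|)² ≤ inf_{t ∈ [v−1, v+1]} |2 + e^{iπt} + e^{iπαt}|. -/
/-!
Write `s = t - v` and let `u` be an odd integer within distance `1` of `α t`, with `w = α t - u`.
Near an odd integer, `1 + cos (π x)` is at least twice the squared distance to it (Jordan's
inequality), so the real part of `2 + e^{iπt} + e^{iπαt}` is at least `2 (s² + w²)`. On the other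
hand `v α - u = w - α s`, so by Cauchy–Schwarz the distance from `v α` to the odd integers is at
most `√((1 + α²)(s² + w²))`. Hence `c = 2 / (1 + α²)` works.
-/

open Real

theorem sq_le_sin_pi_mul_div_two_sq {r : ℝ} (hr : |r| ≤ 1) : r ^ 2 ≤ sin (π * r / 2) ^ 2 := by
  have hjordan : |r| ≤ sin (π * |r| / 2) := by
    have h := mul_le_sin (by positivity : 0 ≤ π * |r| / 2)
      (by nlinarith [pi_pos] : π * |r| / 2 ≤ π / 2)
    rwa [show 2 / π * (π * |r| / 2) = |r| by field_simp] at h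
  have hsq : sin (π * |r| / 2) ^ 2 = sin (π * r / 2) ^ 2 := by
    rcases abs_choice r with h | h <;> rw [h]
    rw [show π * -r / 2 = -(π * r / 2) by ring, sin_neg, neg_sq]
  calc r ^ 2 = |r| ^ 2 := (sq_abs r).symm
    _ ≤ sin (π * |r| / 2) ^ 2 := pow_le_pow_left₀ (abs_nonneg r) hjordan 2
    _ = sin (π * r / 2) ^ 2 := hsq

theorem one_add_cos_pi_mul_of_odd {u : ℤ} (hu : Odd u) (x : ℝ) :
    1 + cos (π * x) = 2 * sin (π * (x - u) / 2) ^ 2 := by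
  have hcos : cos (π * x) = -cos (π * (x - u)) := by
    rw [show π * x = π * (x - u) + u * π by ring, cos_add_int_mul_pi, hu.neg_one_zpow, neg_one_mul]
  have hdouble := cos_two_mul_eq_one_sub (π * (x - u) / 2)
  rw [show 2 * (π * (x - u) / 2) = π * (x - u) by ring] at hdouble
  rw [hcos, hdouble]
  ring

theorem two_mul_sq_le_one_add_cos_pi_mul {u : ℤ} (hu : Odd u) {x : ℝ} (hx : |x - u| ≤ 1) :
    2 * (x - u) ^ 2 ≤ 1 + cos (π * x) := by
  rw [one_add_cos_pi_mul_of_odd hu]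
  linarith [sq_le_sin_pi_mul_div_two_sq hx]

theorem exists_odd_abs_sub_le_one (x : ℝ) : ∃ u : ℤ, Odd u ∧ |x - u| ≤ 1 := by
  refine ⟨2 * round ((x - 1) / 2) + 1, odd_two_mul_add_one _, ?_⟩
  have h := abs_sub_round ((x - 1) / 2)
  rw [show x - ((2 * round ((x - 1) / 2) + 1 : ℤ) : ℝ) = 2 * ((x - 1) / 2 - round ((x - 1) / 2)) by
    push_cast; ring, abs_mul, abs_two]
  linarith

theorem two_add_cos_add_cos_le_norm (a b : ℝ) :
    2 + cos a + cos b ≤ ‖2 + Complex.exp (a * Complex.I) + Complex.exp (b * Complex.I)‖ := by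
  have hre : (2 + Complex.exp (a * Complex.I) + Complex.exp (b * Complex.I)).re
      = 2 + cos a + cos b := by
    simp only [Complex.add_re, Complex.exp_ofReal_mul_I_re]
    norm_num
  exact hre ▸ Complex.re_le_norm _

theorem sq_le_two_add_cos_add_cos {α t D : ℝ} {v : ℤ} (hv : Odd v) (ht : |t - v| ≤ 1)
    (hD0 : 0 ≤ D) (hD : ∀ u : ℤ, Odd u → D ≤ |v * α - u|) :
    2 / (1 + α ^ 2) * D ^ 2 ≤ 2 + cos (π * t) + cos (π * α * t) := by
  obtain ⟨u, hu, hw⟩ := exists_odd_abs_sub_le_one (α * t)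
  set s := t - v
  set w := α * t - u
  have hcos_t : 2 * s ^ 2 ≤ 1 + cos (π * t) := two_mul_sq_le_one_add_cos_pi_mul hv ht
  have hcos_αt : 2 * w ^ 2 ≤ 1 + cos (π * α * t) := by
    rw [mul_assoc]; exact two_mul_sq_le_one_add_cos_pi_mul hu hw
  have hDle : D ≤ |w| + |α| * |s| := by
    calc D ≤ |v * α - u| := hD u hu
      _ = |w - α * s| := by congr 1; simp only [s, w]; ring
      _ ≤ |w| + |α| * |s| := by rw [← abs_mul]; exact abs_sub _ _
  have hcauchy : D ^ 2 ≤ (1 + α ^ 2) * (w ^ 2 + s ^ 2) := by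
    calc D ^ 2 ≤ (|w| + |α| * |s|) ^ 2 := pow_le_pow_left₀ hD0 hDle 2
      _ ≤ (1 + |α| ^ 2) * (|w| ^ 2 + |s| ^ 2) := by nlinarith [sq_nonneg (|α| * |w| - |s|)]
      _ = (1 + α ^ 2) * (w ^ 2 + s ^ 2) := by simp only [sq_abs]
  rw [div_mul_eq_mul_div, div_le_iff₀ (by positivity)]
  nlinarith

theorem oddApprox_sq_le_inf_h_general (α : ℝ) :
    ∃ c : ℝ, 0 < c ∧ ∀ v : ℤ, Odd v →
      c * (sInf {x : ℝ | ∃ u : ℤ, Odd u ∧ x = |(v : ℝ) * α - (u : ℝ)|}) ^ 2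
        ≤ ⨅ t : Set.Icc ((v : ℝ) - 1) ((v : ℝ) + 1),
            ‖2 + Complex.exp (Real.pi * (t : ℝ) * Complex.I)
              + Complex.exp (Real.pi * α * (t : ℝ) * Complex.I)‖ := by
  refine ⟨2 / (1 + α ^ 2), by positivity, fun v hv => ?_⟩
  set S := {x : ℝ | ∃ u : ℤ, Odd u ∧ x = |(v : ℝ) * α - (u : ℝ)|}
  have hS : ∀ x ∈ S, 0 ≤ x := by rintro _ ⟨u, -, rfl⟩; positivity
  have hD : ∀ u : ℤ, Odd u → sInf S ≤ |v * α - u| := fun u hu =>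
    csInf_le ⟨0, hS⟩ ⟨u, hu, rfl⟩
  have : Nonempty (Set.Icc ((v : ℝ) - 1) ((v : ℝ) + 1)) := ⟨⟨v, by simp⟩⟩
  refine le_ciInf fun ⟨t, ht⟩ => ?_
  have ht' : |t - v| ≤ 1 := abs_sub_le_iff.mpr ⟨by linarith [ht.2], by linarith [ht.1]⟩
  calc 2 / (1 + α ^ 2) * sInf S ^ 2 ≤ 2 + cos (π * t) + cos (π * α * t) :=
        sq_le_two_add_cos_add_cos hv ht' (Real.sInf_nonneg hS) hD
    _ ≤ _ := by
      simpa only [Complex.ofReal_mul] using two_add_cos_add_cos_le_norm (π * t) (π * α * t)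

/-- Lower bound: for irrational `α` there exists `c > 0` such that for every odd integer `v`,
`c · (min_{u odd} |vα - u|)² ≤ inf_{t ∈ [v-1, v+1]} |2 + e^{iπt} + e^{iπαt}|`. -/
theorem oddApprox_sq_le_inf_h (α : ℝ) (hα : Irrational α) :
    ∃ c : ℝ, 0 < c ∧ ∀ v : ℤ, Odd v →
      c * (sInf {x : ℝ | ∃ u : ℤ, Odd u ∧ x = |(v : ℝ) * α - (u : ℝ)|}) ^ 2
        ≤ ⨅ t : Set.Icc ((v : ℝ) - 1) ((v : ℝ) + 1),
            ‖2 + Complex.exp (Real.pi * (t : ℝ) * Complex.I)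
              + Complex.exp (Real.pi * α * (t : ℝ) * Complex.I)‖ :=
  oddApprox_sq_le_inf_h_general α
end

section
/- Let α ∈ ℝ be irrational and let ψ: (0,∞) → (0,∞) be decreasing. Assume there exist infinitely many pairs of odd integers u, v with v ≥ 1 such that |α − u/v| ≤ ψ(v)/v. Then there exists C > 0 such that for every t₀ ∈ ℝ there exists t ≥ t₀ with |1 + (e^{it} + e^{itα})/2| ≤ C · (ψ(t/π − 1))². -/
/-!
Take an approximation `|v α - u| ≤ ψ(v)` with `u, v` odd and put `t = (u + v) π / (1 + α)`.
Then `t + t α = (u + v) π` is a multiple of `2π`, so `e^{itα} = e^{-it}` and `g(t) = 1 + cos t`.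
Writing `t = v π + ε` with `ε = (u - v α) π / (1 + α)`, the oddness of `v` turns this into
`g(t) = 1 - cos ε ≤ ε² / 2 ≤ π² ψ(v)² / (2 |1 + α|²)`, and `t / π - 1 = v - 1 + ε / π`.
If `ψ` somewhere drops below `|1 + α|`, then `|ε| ≤ π` for large `v`, so `t / π - 1 ≤ v` and
`ψ(v) ≤ ψ(t / π - 1)`. Otherwise `ψ > |1 + α|` everywhere and the trivial bound `g ≤ 2` suffices.
-/

open Real

namespace OddOddApprox

noncomputable def g (α t : ℝ) : ℝ :=
  ‖1 + (Complex.exp ((t : ℂ) * Complex.I) + Complex.exp ((t : ℂ) * (α : ℂ) * Complex.I)) / 2‖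

lemma g_le_two (α t : ℝ) : g α t ≤ 2 := by
  unfold g
  grw [norm_add_le, norm_div, norm_add_le]
  norm_num [Complex.norm_exp]

lemma g_eq_one_add_cos {α t : ℝ} (k : ℤ) (h : t * (1 + α) = 2 * k * π) :
    g α t = 1 + cos t := by
  have htα : t * α = k * (2 * π) - t := by linarith
  have hα_arg : (t : ℂ) * (α : ℂ) * Complex.I = ((t * α : ℝ) : ℂ) * Complex.I := by
    push_cast; ring
  have hsum : 1 + (Complex.exp ((t : ℂ) * Complex.I) + Complex.exp (((t * α : ℝ) : ℂ) * Complex.I)) / 2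
      = ((1 + cos t : ℝ) : ℂ) := by
    rw [Complex.exp_mul_I, Complex.exp_mul_I, ← Complex.ofReal_cos, ← Complex.ofReal_sin,
      ← Complex.ofReal_cos, ← Complex.ofReal_sin, htα, cos_int_mul_two_pi_sub,
      sin_int_mul_two_pi_sub]
    push_cast
    ring
  rw [g, hα_arg, hsum, Complex.norm_real, norm_of_nonneg (by linarith [neg_one_le_cos t])]

lemma exists_g_le_sq_of_odd {α : ℝ} (hα : 1 + α ≠ 0) {u v : ℤ} (hu : Odd u) (hv : Odd v) :
    ∃ ε : ℝ, |ε| = π * |v * α - u| / |1 + α| ∧ g α (v * π + ε) ≤ ε ^ 2 / 2 := by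
  refine ⟨(u - v * α) * π / (1 + α), ?_, ?_⟩
  · rw [abs_div, abs_mul, abs_of_pos pi_pos, abs_sub_comm]
    ring
  · obtain ⟨k, hk⟩ : Even (u + v) := hu.add_odd hv
    have ht : (v * π + (u - v * α) * π / (1 + α)) * (1 + α) = 2 * k * π := by
      have hk' : (u : ℝ) + v = 2 * k := by exact_mod_cast (by omega : u + v = 2 * k)
      rw [add_mul, div_mul_cancel₀ _ hα]
      linear_combination π * hk'
    rw [g_eq_one_add_cos k ht, add_comm ((v : ℝ) * π), cos_add_int_mul_pi, hv.neg_one_zpow]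
    linarith [one_sub_sq_div_two_le_cos (x := (u - v * α) * π / (1 + α))]

lemma exists_le_snd_of_infinite {S : Set (ℤ × ℤ)} (hS : S.Infinite) {α K : ℝ}
    (hSα : ∀ p ∈ S, 0 ≤ p.2 ∧ |p.2 * α - p.1| ≤ K) (B : ℤ) : ∃ p ∈ S, B ≤ p.2 := by
  by_contra! hlt
  set N : ℤ := ⌈|α| * B + K⌉
  refine hS ((Set.finite_Icc ((-N, 0) : ℤ × ℤ) (N, B)).subset fun p hp => ?_)
  obtain ⟨hp2, hpK⟩ := hSα p hp
  have hpB : (p.2 : ℝ) ≤ B := by exact_mod_cast (hlt p hp).le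
  have hp1 : |(p.1 : ℝ)| ≤ N := calc
    |(p.1 : ℝ)| ≤ |(p.2 : ℝ) * α| + |p.2 * α - p.1| := by
        simpa only [sub_sub_cancel] using abs_sub ((p.2 : ℝ) * α) (p.2 * α - p.1)
    _ ≤ |α| * B + K := by
        rw [abs_mul, abs_of_nonneg (by exact_mod_cast hp2 : (0 : ℝ) ≤ p.2)]
        nlinarith [abs_nonneg α]
    _ ≤ N := Int.le_ceil _
  have hp1' : |p.1| ≤ N := by exact_mod_cast hp1
  exact ⟨⟨neg_le_of_abs_le hp1', hp2⟩, ⟨le_of_abs_le hp1', (hlt p hp).le⟩⟩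

lemma abs_mul_sub_le_of_abs_sub_div_le {α K : ℝ} {u v : ℤ} (hv : 0 < v)
    (h : |α - u / v| ≤ K / v) : |v * α - u| ≤ K := by
  have hv' : (0 : ℝ) < v := by exact_mod_cast hv
  calc |v * α - u| = v * |α - u / v| := by
        rw [← abs_of_pos hv', ← abs_mul, abs_of_pos hv', mul_sub, mul_div_cancel₀ _ hv'.ne']
    _ ≤ v * (K / v) := by gcongr
    _ = K := mul_div_cancel₀ _ hv'.ne'

lemma le_mul_pi_add_of_abs_le {t₀ v ε K : ℝ} (hv : t₀ / π + K ≤ v) (hε : |ε| ≤ π * K) :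
    t₀ ≤ v * π + ε := by
  have := (div_add' t₀ K π pi_ne_zero ▸ hv : (t₀ + K * π) / π ≤ v)
  rw [div_le_iff₀ pi_pos] at this
  linarith [neg_abs_le ε]

lemma abs_div_pi_sub_one_sub_le {v ε K : ℝ} (hε : |ε| ≤ π * K) :
    |(v * π + ε) / π - 1 - (v - 1)| ≤ K := by
  rw [show (v * π + ε) / π - 1 - (v - 1) = ε / π by field_simp; ring, abs_div,
    abs_of_pos pi_pos, div_le_iff₀ pi_pos, mul_comm]
  exact hε

variable {α : ℝ} {ψ : ℝ → ℝ}

def oddApproximations (α : ℝ) (ψ : ℝ → ℝ) : Set (ℤ × ℤ) :=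
  {p | Odd p.1 ∧ Odd p.2 ∧ 1 ≤ p.2 ∧ |α - (p.1 : ℝ) / (p.2 : ℝ)| ≤ ψ (p.2 : ℝ) / (p.2 : ℝ)}

lemma exists_g_le_sq (hα : 1 + α ≠ 0) (hψdec : AntitoneOn ψ (Set.Ioi 0))
    (happrox : (oddApproximations α ψ).Infinite) (x₀ : ℝ) :
    ∃ v : ℝ, x₀ ≤ v ∧ 1 ≤ v ∧
      ∃ ε : ℝ, |ε| ≤ π * (ψ v / |1 + α|) ∧ g α (v * π + ε) ≤ ε ^ 2 / 2 := by
  have hψ_le : ∀ v : ℤ, 1 ≤ v → ψ v ≤ ψ 1 := fun v hv =>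
    hψdec (Set.mem_Ioi.2 one_pos) (Set.mem_Ioi.2 (by exact_mod_cast hv)) (by exact_mod_cast hv)
  have hbound : ∀ p ∈ oddApproximations α ψ, 0 ≤ p.2 ∧ |p.2 * α - p.1| ≤ ψ 1 :=
    fun p ⟨_, _, hp1, hp⟩ =>
      ⟨by omega, (abs_mul_sub_le_of_abs_sub_div_le (by omega) hp).trans (hψ_le _ hp1)⟩
  obtain ⟨⟨u, v⟩, ⟨hu, hv, hv1, happ⟩, hvB⟩ :=
    exists_le_snd_of_infinite happrox hbound ⌈x₀⌉
  obtain ⟨ε, hε, hg⟩ := exists_g_le_sq_of_odd hα hu hv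
  refine ⟨v, (Int.le_ceil x₀).trans (by exact_mod_cast hvB), by exact_mod_cast hv1, ε, ?_, hg⟩
  rw [hε, mul_div_assoc]
  gcongr
  exact abs_mul_sub_le_of_abs_sub_div_le (by omega) happ

lemma exists_g_le_of_exists_le (hα : 1 + α ≠ 0) (hψpos : ∀ t : ℝ, 0 < t → 0 < ψ t)
    (hψdec : AntitoneOn ψ (Set.Ioi 0)) (happrox : (oddApproximations α ψ).Infinite)
    {x₀ : ℝ} (hx₀ : 0 < x₀) (hψx₀ : ψ x₀ ≤ |1 + α|) (t₀ : ℝ) :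
    ∃ t, t₀ ≤ t ∧ g α t ≤ π ^ 2 / (2 * |1 + α| ^ 2) * ψ (t / π - 1) ^ 2 := by
  obtain ⟨v, hv, -, ε, hε, hg⟩ :=
    exists_g_le_sq hα hψdec happrox (max (max x₀ 3) (t₀ / π + 1))
  rw [max_le_iff, max_le_iff] at hv
  obtain ⟨⟨hvx₀, hv3⟩, hvt₀⟩ := hv
  have hψv : ψ v / |1 + α| ≤ 1 := by
    rw [div_le_one (abs_pos.2 hα)]
    exact (hψdec hx₀ (Set.mem_Ioi.2 (by linarith)) hvx₀).trans hψx₀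
  have hεπ : |ε| ≤ π * 1 := hε.trans (by gcongr)
  obtain ⟨hs_lo, hs_hi⟩ := abs_le.1 (abs_div_pi_sub_one_sub_le (v := v) hεπ)
  refine ⟨v * π + ε, le_mul_pi_add_of_abs_le hvt₀ hεπ, ?_⟩
  have hψs : ψ v ≤ ψ ((v * π + ε) / π - 1) :=
    hψdec (Set.mem_Ioi.2 (by linarith)) (Set.mem_Ioi.2 (by linarith)) (by linarith)
  calc g α (v * π + ε) ≤ ε ^ 2 / 2 := hg
    _ ≤ (π * (ψ v / |1 + α|)) ^ 2 / 2 :=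
        div_le_div_of_nonneg_right (sq_le_sq' (neg_le_of_abs_le hε) (le_of_abs_le hε)) zero_le_two
    _ = π ^ 2 / (2 * |1 + α| ^ 2) * ψ v ^ 2 := by ring
    _ ≤ π ^ 2 / (2 * |1 + α| ^ 2) * ψ ((v * π + ε) / π - 1) ^ 2 := by
        gcongr
        exact (hψpos v (by linarith)).le

lemma exists_g_le_of_forall_lt (hα : 1 + α ≠ 0) (hψdec : AntitoneOn ψ (Set.Ioi 0))
    (happrox : (oddApproximations α ψ).Infinite) (hψ : ∀ x, 0 < x → |1 + α| < ψ x) (t₀ : ℝ) :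
    ∃ t, t₀ ≤ t ∧ g α t ≤ 2 / |1 + α| ^ 2 * ψ (t / π - 1) ^ 2 := by
  set K := ψ 1 / |1 + α|
  obtain ⟨v, hv, hv1, ε, hε, -⟩ :=
    exists_g_le_sq hα hψdec happrox (max (K + 2) (t₀ / π + K))
  rw [max_le_iff] at hv
  obtain ⟨hvK, hvt₀⟩ := hv
  have hεK : |ε| ≤ π * K := hε.trans <| mul_le_mul_of_nonneg_left (div_le_div_of_nonneg_right
    (hψdec (Set.mem_Ioi.2 one_pos) (Set.mem_Ioi.2 (by linarith)) hv1) (abs_nonneg _)) pi_pos.le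
  obtain ⟨hs_lo, -⟩ := abs_le.1 (abs_div_pi_sub_one_sub_le (v := v) hεK)
  refine ⟨v * π + ε, le_mul_pi_add_of_abs_le hvt₀ hεK, ?_⟩
  have hψs := hψ ((v * π + ε) / π - 1) (by linarith)
  calc g α (v * π + ε) ≤ 2 := g_le_two α _
    _ = 2 / |1 + α| ^ 2 * |1 + α| ^ 2 := by field_simp
    _ ≤ 2 / |1 + α| ^ 2 * ψ ((v * π + ε) / π - 1) ^ 2 := by
        gcongr

end OddOddApprox

open OddOddApprox

/-- If `α` is irrational and there are infinitely many odd/odd rational approximations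
`|α - u/v| ≤ ψ(v)/v`, then `g(t) = |1 + (e^{it} + e^{itα})/2|` is bounded by
`C (ψ(t/π - 1))²` for arbitrarily large `t`. -/
theorem g_small_of_oddOdd_approx (α : ℝ) (hα : Irrational α) (ψ : ℝ → ℝ)
    (hψpos : ∀ t : ℝ, 0 < t → 0 < ψ t) (hψdec : AntitoneOn ψ (Set.Ioi 0))
    (happrox : {p : ℤ × ℤ | Odd p.1 ∧ Odd p.2 ∧ 1 ≤ p.2 ∧
        |α - (p.1 : ℝ) / (p.2 : ℝ)| ≤ ψ (p.2 : ℝ) / (p.2 : ℝ)}.Infinite) :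
    ∃ C : ℝ, 0 < C ∧ ∀ t₀ : ℝ, ∃ t : ℝ, t₀ ≤ t ∧
      ‖1 + (Complex.exp ((t : ℂ) * Complex.I)
          + Complex.exp ((t : ℂ) * (α : ℂ) * Complex.I)) / 2‖
        ≤ C * (ψ (t / Real.pi - 1)) ^ 2 := by
  have hα1 : 1 + α ≠ 0 := by simpa using (hα.natCast_add 1).ne_zero
  by_cases hA : ∃ x₀, 0 < x₀ ∧ ψ x₀ ≤ |1 + α|
  · obtain ⟨x₀, hx₀, hψx₀⟩ := hA
    exact ⟨_, by positivity, exists_g_le_of_exists_le hα1 hψpos hψdec happrox hx₀ hψx₀⟩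
  · push Not at hA
    exact ⟨_, by positivity, exists_g_le_of_forall_lt hα1 hψdec happrox hA⟩
end

section
/- Let α ∈ ℝ be irrational. Then there exists C > 0 such that for every t₀ ∈ ℝ there exists t ≥ t₀ with |1 + (e^{it} + e^{itα})/2| ≤ C/t². -/
/-!
If `t (1 + α) ∈ 2πℤ` then `e^{itα} = e^{-it}`, so the quantity is `1 + cos t`, which is at most
`(t - mπ)² / 2` for every odd `m`. Taking `t = π q δ` with `δ = 2 / |1 + α|`, it suffices to
find arbitrarily large `q` with `|q δ - m| ≤ 1 / q` and `m` odd. Continued fractions give this: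
the convergents satisfy `|qₙ δ - pₙ| ≤ 1 / qₙ`, and since `pₙ qₙ₊₁ - qₙ pₙ₊₁ = ±1`, one of two
consecutive numerators is odd.
-/

open Real

theorem Int.odd_or_odd_of_odd_mul_sub_mul {a b c d : ℤ} (h : Odd (a * d - b * c)) :
    Odd a ∨ Odd c := by
  by_contra! hac
  simp only [Int.not_odd_iff_even] at hac
  exact Int.not_even_iff_odd.2 h ((hac.1.mul_right d).sub (hac.2.mul_left b))

namespace GenContFract

variable {K : Type*} [Field K] [LinearOrder K] [FloorRing K] {v : K} {n : ℕ}

theorem exists_int_eq_contsAux (v : K) (n : ℕ) :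
    ∃ a b : ℤ, (GenContFract.of v).contsAux n = ⟨(a : K), (b : K)⟩ := by
  induction n using Nat.twoStepInduction with
  | zero => exact ⟨1, 0, by simp [zeroth_contAux_eq_one_zero]⟩
  | one => exact ⟨⌊v⌋, 1, by simp [first_contAux_eq_h_one, of_h_eq_floor]⟩
  | more n ih ih' =>
    by_cases hn : (GenContFract.of v).TerminatedAt n
    · rw [contsAux_stable_step_of_terminated hn]
      exact ih'
    obtain ⟨gp, hgp⟩ := Option.ne_none_iff_exists'.1 hn
    obtain ⟨z, hz⟩ := exists_int_eq_of_partDen (partDen_eq_s_b hgp)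
    obtain ⟨a, b, hab⟩ := ih
    obtain ⟨a', b', hab'⟩ := ih'
    refine ⟨z * a' + a, z * b' + b, ?_⟩
    rw [contsAux_recurrence hgp hab hab', of_partNum_eq_one (partNum_eq_s_a hgp), hz]
    push_cast
    ring_nf

theorem exists_int_eq_num_den (v : K) (n : ℕ) :
    ∃ p q : ℤ, (GenContFract.of v).nums n = p ∧ (GenContFract.of v).dens n = q := by
  obtain ⟨p, q, h⟩ := exists_int_eq_contsAux v (n + 1)
  exact ⟨p, q, by rw [num_eq_conts_a, nth_cont_eq_succ_nth_contAux, h],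
    by rw [den_eq_conts_b, nth_cont_eq_succ_nth_contAux, h]⟩

variable [IsStrictOrderedRing K]

theorem one_le_of_den (n : ℕ) : 1 ≤ (GenContFract.of v).dens n := by
  induction n with
  | zero => rw [zeroth_den_eq_one]
  | succ n ih => exact ih.trans of_den_mono

theorem abs_den_mul_sub_num_le (hn : ¬(GenContFract.of v).TerminatedAt n) :
    |(GenContFract.of v).dens n * v - (GenContFract.of v).nums n|
      ≤ 1 / (GenContFract.of v).dens n := by
  set B := (GenContFract.of v).dens with hB_def
  have hpos : 0 < B n := one_pos.trans_le (one_le_of_den n)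
  have hB : B n * v - (GenContFract.of v).nums n = B n * (v - (GenContFract.of v).convs n) := by
    rw [conv_eq_num_div_den, ← hB_def]
    field_simp
  calc |B n * v - (GenContFract.of v).nums n|
      ≤ B n * (1 / (B n * B (n + 1))) := by
        rw [hB, abs_mul, abs_of_pos hpos]
        exact mul_le_mul_of_nonneg_left (abs_sub_convs_le hn) hpos.le
    _ = 1 / B (n + 1) := by field_simp
    _ ≤ 1 / B n := one_div_le_one_div_of_le hpos of_den_mono

theorem exists_odd_abs_mul_sub_le (hn : ¬(GenContFract.of v).TerminatedAt (n + 1)) :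
    ∃ p q : ℤ, Odd p ∧ (GenContFract.of v).dens n ≤ q ∧ |q * v - p| ≤ 1 / q := by
  have hn' : ¬(GenContFract.of v).TerminatedAt n := mt (terminated_stable n.le_succ) hn
  obtain ⟨p, q, hp, hq⟩ := exists_int_eq_num_den v n
  obtain ⟨p', q', hp', hq'⟩ := exists_int_eq_num_den v (n + 1)
  have hdet : Odd (p * q' - q * p') := by
    have h := SimpContFract.determinant (s := SimpContFract.of v) hn'
    rw [SimpContFract.of, hp, hq, hp', hq'] at h
    have h' : p * q' - q * p' = (-1) ^ (n + 1) := by exact_mod_cast h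
    exact h' ▸ (Int.odd_iff.2 rfl : Odd (-1 : ℤ)).pow
  have hqq' : (q : K) ≤ q' := hq ▸ hq' ▸ of_den_mono
  rcases Int.odd_or_odd_of_odd_mul_sub_mul hdet with hodd | hodd
  · exact ⟨p, q, hodd, hq.le, hp ▸ hq ▸ abs_den_mul_sub_num_le hn'⟩
  · exact ⟨p', q', hodd, hq ▸ hqq', hp' ▸ hq' ▸ abs_den_mul_sub_num_le hn⟩

end GenContFract

theorem Irrational.abs {x : ℝ} (hx : Irrational x) : Irrational |x| := by
  rcases abs_choice x with h | h <;> rw [h]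
  exacts [hx, hx.neg]

theorem Irrational.not_terminatedAt_of {ξ : ℝ} (hξ : Irrational ξ) (n : ℕ) :
    ¬(GenContFract.of ξ).TerminatedAt n := fun h ↦ by
  obtain ⟨q, hq⟩ := (GenContFract.terminates_iff_rat ξ).1 ⟨n, h⟩
  exact hξ ⟨q, hq.symm⟩

theorem Irrational.exists_odd_abs_mul_sub_le {ξ : ℝ} (hξ : Irrational ξ) (N : ℝ) :
    ∃ p q : ℤ, Odd p ∧ 0 < q ∧ N ≤ q ∧ |q * ξ - p| ≤ 1 / q := by
  obtain ⟨n, hn⟩ := exists_nat_ge N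
  obtain ⟨p, q, hp, hq, happrox⟩ :=
    GenContFract.exists_odd_abs_mul_sub_le (hξ.not_terminatedAt_of (n + 2))
  have hfib : (Nat.fib (n + 2) : ℝ) ≤ (GenContFract.of ξ).dens (n + 1) :=
    GenContFract.succ_nth_fib_le_of_nth_den (Or.inr (hξ.not_terminatedAt_of n))
  have hn_fib : (n : ℝ) ≤ Nat.fib (n + 2) := by exact_mod_cast Nat.fib_add_two_strictMono.id_le n
  refine ⟨p, q, hp, ?_, by linarith, happrox⟩
  exact_mod_cast (one_pos.trans_le (GenContFract.one_le_of_den (n + 1))).trans_le hq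

theorem exp_mul_I_add_exp_mul_I_eq_two_cos {t α : ℝ} {l : ℤ} (h : t * (1 + α) = 2 * π * l) :
    Complex.exp (t * Complex.I) + Complex.exp (t * α * Complex.I) = 2 * Complex.cos t := by
  have htα : (t * α : ℂ) * Complex.I = l * (2 * π * Complex.I) + -t * Complex.I := by
    have h' : (t * α : ℂ) = 2 * π * l - t := by exact_mod_cast (by linear_combination h)
    rw [h']
    ring
  rw [htα, Complex.exp_add, Complex.exp_int_mul_two_pi_mul_I, one_mul, Complex.two_cos]

theorem norm_one_add_exp_mul_I_add_exp_mul_I_div_two {t α : ℝ} {l : ℤ}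
    (h : t * (1 + α) = 2 * π * l) :
    ‖1 + (Complex.exp (t * Complex.I) + Complex.exp (t * α * Complex.I)) / 2‖ = 1 + cos t := by
  rw [exp_mul_I_add_exp_mul_I_eq_two_cos h, mul_div_cancel_left₀ _ two_ne_zero,
    ← Complex.ofReal_cos, ← Complex.ofReal_one, ← Complex.ofReal_add, Complex.norm_real,
    Real.norm_of_nonneg (by linarith [neg_one_le_cos t])]

theorem one_add_cos_le_sq_sub_mul_pi {m : ℤ} (hm : Odd m) (x : ℝ) :
    1 + cos x ≤ (x - m * π) ^ 2 / 2 := by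
  have hcos : cos x = -cos (x - m * π) := by
    rw [cos_sub_int_mul_pi, hm.neg_one_zpow]
    ring
  linarith [one_sub_sq_div_two_le_cos (x := x - m * π)]

/-- For irrational `α` there is `C > 0` such that `|1 + (e^{it} + e^{itα})/2| ≤ C/t²`
for arbitrarily large `t`. -/
theorem g_le_C_div_t_sq (α : ℝ) (hα : Irrational α) :
    ∃ C : ℝ, 0 < C ∧ ∀ t₀ : ℝ, ∃ t : ℝ, t₀ ≤ t ∧
      ‖1 + (Complex.exp ((t : ℂ) * Complex.I)
          + Complex.exp ((t : ℂ) * (α : ℂ) * Complex.I)) / 2‖ ≤ C / t ^ 2 := by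
  have hα' : Irrational |1 + α| := by simpa using (hα.natCast_add 1).abs
  have h1α : 1 + α ≠ 0 := by simpa using (hα.natCast_add 1).ne_zero
  set δ := 2 / |1 + α| with hδ_def
  have hδ : Irrational δ := by simpa using hα'.ratCast_div (q := 2) two_ne_zero
  have hδ_pos : 0 < δ := div_pos two_pos (abs_pos.2 h1α)
  refine ⟨π ^ 4 * δ ^ 2 / 2, by positivity, fun t₀ ↦ ?_⟩
  obtain ⟨p, q, hp, hq, hq_large, happrox⟩ := hδ.exists_odd_abs_mul_sub_le (t₀ / (π * δ))
  have hq' : (0 : ℝ) < q := by exact_mod_cast hq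
  obtain ⟨l, hl⟩ : ∃ l : ℤ, π * q * δ * (1 + α) = 2 * π * l := by
    rcases abs_choice (1 + α) with h | h
    · exact ⟨q, by rw [hδ_def, h]; field_simp⟩
    · exact ⟨-q, by rw [hδ_def, h]; push_cast; field_simp⟩
  refine ⟨π * q * δ, ?_, ?_⟩
  · rw [div_le_iff₀ (by positivity)] at hq_large
    linarith
  rw [norm_one_add_exp_mul_I_add_exp_mul_I_div_two hl]
  calc 1 + cos (π * q * δ) ≤ (π * q * δ - p * π) ^ 2 / 2 := one_add_cos_le_sq_sub_mul_pi hp _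
    _ = π ^ 2 * |q * δ - p| ^ 2 / 2 := by rw [sq_abs]; ring
    _ ≤ π ^ 2 * (1 / q) ^ 2 / 2 := by gcongr
    _ = π ^ 4 * δ ^ 2 / 2 / (π * q * δ) ^ 2 := by field_simp
end

section
/- For every ε > 0, for Lebesgue almost every α ∈ ℝ there exists t₀ > 0 such that for all t ≥ t₀, 1/(t² (log t)^{2+ε}) ≤ |1 + (e^{it} + e^{itα})/2|. -/
/-!
The real part of `1 + (e^{it} + e^{itα})/2` is `cos²(t/2) + cos²(tα/2)`. If the norm is below
`d²`, both cosines are below `d`, so `t` and `tα` lie within `πd` of odd multiples `qπ` and `pπ`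
of `π`, whence `|α - p/q| ≤ d (1 + |α|)/q` with `q ≤ t`. For `d = 1/(t (log t)^{1+ε/2})` and
large `t` this is an approximation `|α - p/q| ≤ 1/(q² (log q)^{1+ε/4})` with `q → ∞` as `t → ∞`.
Since `∑ 1/(q (log q)^{1+ε/4}) < ∞`, Borel–Cantelli (the convergence half of Khintchine's theorem)
shows that almost every `α` has only finitely many such approximations.
-/

open MeasureTheory Real Filter

theorem summable_one_div_nat_mul_log_rpow {p : ℝ} (hp : 1 < p) :
    Summable fun n : ℕ => 1 / (n * log n ^ p) := by
  have hlog2 : 0 < log 2 := log_pos one_lt_two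
  refine (summable_condensed_iff_of_eventually_nonneg
    (Eventually.of_forall fun n => by positivity) ?_).1 ?_
  · filter_upwards [eventually_ge_atTop 2] with n hn
    have hn' : (2 : ℝ) ≤ n := by exact_mod_cast hn
    have : 0 < log n := log_pos (by linarith)
    push_cast
    gcongr
    · linarith
    · linarith
  · have hcond : ∀ k : ℕ, (2 : ℝ) ^ k * (1 / (((2 ^ k : ℕ) : ℝ) * log ((2 ^ k : ℕ) : ℝ) ^ p))
        = (log 2 ^ p)⁻¹ * (1 / (k : ℝ) ^ p) := by
      intro k
      rw [Nat.cast_pow, Nat.cast_ofNat, log_pow, mul_rpow (Nat.cast_nonneg k) hlog2.le]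
      field_simp
    simp only [hcond]
    exact (Real.summable_one_div_nat_rpow.2 hp).mul_left _

/-- Restricting to `|p| ≤ (N + 1) q` keeps the measure `O(q ψ q)` while still catching every
`α ∈ (-N, N)` with `|α - p / q| ≤ ψ q ≤ 1`. -/
def nearFractions (ψ : ℕ → ℝ) (N q : ℕ) : Set ℝ :=
  ⋃ p ∈ Finset.Icc (-((N + 1) * q : ℤ)) ((N + 1) * q), Metric.closedBall (p / q : ℝ) (ψ q)

theorem volume_nearFractions_le (ψ : ℕ → ℝ) (N q : ℕ) :
    volume (nearFractions ψ N q) ≤ ENNReal.ofReal ((2 * (N + 1) * q + 1) * (2 * ψ q)) := by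
  have hcard : (Finset.Icc (-((N + 1) * q : ℤ)) ((N + 1) * q)).card = 2 * (N + 1) * q + 1 := by
    have : ((N + 1) * q + 1 - -((N + 1) * q) : ℤ) = ((2 * (N + 1) * q + 1 : ℕ) : ℤ) := by
      push_cast; ring
    rw [Int.card_Icc, this, Int.toNat_natCast]
  refine (measure_biUnion_finset_le _ _).trans_eq ?_
  simp only [Real.volume_closedBall, Finset.sum_const, nsmul_eq_mul, hcard]
  rw [← ENNReal.ofReal_natCast, ← ENNReal.ofReal_mul (Nat.cast_nonneg _)]
  norm_num

theorem mem_nearFractions {ψ : ℕ → ℝ} {N q : ℕ} {α : ℝ} {p : ℤ} (hq : 0 < q) (hψ : ψ q ≤ 1)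
    (hα : |α| < N) (h : |α - p / q| ≤ ψ q) : α ∈ nearFractions ψ N q := by
  have hq' : (0 : ℝ) < q := by exact_mod_cast hq
  have hpq : |(p : ℝ)| ≤ (N + 1) * q := by
    have : |(p : ℝ) / q| ≤ N + 1 := by
      calc |(p : ℝ) / q| = |α - (α - p / q)| := by ring_nf
        _ ≤ |α| + |α - p / q| := abs_sub _ _
        _ ≤ N + 1 := by linarith
    rwa [abs_div, Nat.abs_cast, div_le_iff₀ hq'] at this
  refine Set.mem_iUnion₂.2 ⟨p, ?_, Metric.mem_closedBall.2 (by rwa [Real.dist_eq])⟩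
  rw [Finset.mem_Icc, ← abs_le]
  exact_mod_cast hpq

theorem ae_eventually_forall_lt_abs_sub_div {ψ : ℕ → ℝ} (hψ0 : 0 ≤ ψ)
    (hψ : Summable fun q : ℕ => q * ψ q) :
    ∀ᵐ α : ℝ, ∀ᶠ q : ℕ in atTop, ∀ p : ℤ, ψ q < |α - p / q| := by
  have hψ' : Summable ψ := by
    refine hψ.of_norm_bounded_eventually_nat ?_
    filter_upwards [eventually_ge_atTop 1] with q hq
    rw [norm_of_nonneg (hψ0 q)]
    exact le_mul_of_one_le_left (hψ0 q) (by exact_mod_cast hq)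
  have hN : ∀ N : ℕ, ∀ᵐ α : ℝ, ∀ᶠ q in atTop, α ∉ nearFractions ψ N q := by
    intro N
    have hsum : Summable fun q : ℕ => (2 * (N + 1) * q + 1) * (2 * ψ q) :=
      ((hψ.mul_left (4 * ((N : ℝ) + 1))).add (hψ'.mul_left 2)).congr fun q => by ring
    apply ae_eventually_notMem
    refine ne_top_of_le_ne_top ?_ (ENNReal.tsum_le_tsum fun q => volume_nearFractions_le ψ N q)
    have hnonneg (q : ℕ) : 0 ≤ (2 * (N + 1) * q + 1 : ℝ) * (2 * ψ q) :=
      mul_nonneg (by positivity) (mul_nonneg zero_le_two (hψ0 q))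
    rw [← ENNReal.ofReal_tsum_of_nonneg hnonneg hsum]
    exact ENNReal.ofReal_ne_top
  filter_upwards [ae_all_iff.2 hN] with α hα
  obtain ⟨N, hαN⟩ := exists_nat_gt |α|
  filter_upwards [hα N, eventually_gt_atTop 0,
    hψ'.tendsto_atTop_zero.eventually_le_const one_pos] with q hq hq0 hq1 p
  exact lt_of_not_ge fun h => hq (mem_nearFractions hq0 hq1 hαN h)

theorem cos_sq_half_add_cos_sq_half_le_norm (x y : ℝ) :
    cos (x / 2) ^ 2 + cos (y / 2) ^ 2
      ≤ ‖1 + (Complex.exp (x * Complex.I) + Complex.exp (y * Complex.I)) / 2‖ := by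
  have hre : (1 + (Complex.exp (x * Complex.I) + Complex.exp (y * Complex.I)) / 2).re
      = 1 + (cos x + cos y) / 2 := by
    simp [Complex.exp_mul_I, ← Complex.ofReal_cos, ← Complex.ofReal_sin]
  have hx := cos_sq (x / 2)
  have hy := cos_sq (y / 2)
  rw [mul_div_cancel₀ _ two_ne_zero] at hx hy
  linarith [hre ▸ Complex.re_le_norm
    (1 + (Complex.exp (x * Complex.I) + Complex.exp (y * Complex.I)) / 2)]

theorem exists_int_abs_sub_le_of_abs_cos_le {x d : ℝ} (h : |cos x| ≤ d) :
    ∃ k : ℤ, |x - (k + 1 / 2) * π| ≤ π / 2 * d := by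
  set k := round ((x - π / 2) / π)
  set r := x - (k + 1 / 2) * π
  have hr : |r| ≤ π / 2 := by
    have : r = ((x - π / 2) / π - k) * π := by field_simp; ring
    rw [this, abs_mul, abs_of_pos pi_pos]
    nlinarith [abs_sub_round ((x - π / 2) / π), pi_pos]
  have hcos : |cos x| = |sin r| := by
    rw [show x = r + π / 2 + k * π by ring, cos_antiperiodic.add_int_mul_eq k, cos_add_pi_div_two]
    rcases Int.units_eq_one_or k.negOnePow with h | h <;> simp [h]
  refine ⟨k, ?_⟩
  have := mul_abs_le_abs_sin hr
  rw [div_mul_eq_mul_div, div_le_iff₀ pi_pos] at this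
  nlinarith [pi_pos]

theorem abs_sub_div_le_of_abs_sub_mul_le {α t c d p q : ℝ} (hc : 0 < c) (hq : 0 < q)
    (ht : |t - q * c| ≤ c * d) (htα : |t * α - p * c| ≤ c * d) :
    |α - p / q| ≤ d * (1 + |α|) / q := by
  have heq : α - p / q = ((q * c - t) * α + (t * α - p * c)) / (q * c) := by field_simp; ring
  rw [heq, abs_div, abs_of_pos (mul_pos hq hc), div_le_div_iff₀ (by positivity) hq]
  calc |(q * c - t) * α + (t * α - p * c)| * q
      ≤ (|q * c - t| * |α| + |t * α - p * c|) * q := by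
        gcongr
        exact (abs_add_le _ _).trans_eq (by rw [abs_mul])
    _ ≤ (c * d * |α| + c * d) * q := by
        rw [abs_sub_comm] at ht
        gcongr
    _ = d * (1 + |α|) * (q * c) := by ring

theorem exists_approx_of_norm_lt_sq {α t d : ℝ} (ht : π < t) (hd0 : 0 ≤ d) (hd1 : d ≤ 1)
    (h : ‖1 + (Complex.exp ((t : ℂ) * Complex.I)
      + Complex.exp ((t : ℂ) * (α : ℂ) * Complex.I)) / 2‖ < d ^ 2) :
    ∃ q : ℕ, ∃ p : ℤ, t ≤ (q + 1) * π ∧ (q : ℝ) ≤ t ∧ |α - p / q| ≤ d * (1 + |α|) / q := by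
  have hcos := cos_sq_half_add_cos_sq_half_le_norm t (t * α)
  push_cast at hcos
  have hcos₁ : |cos (t / 2)| ≤ d :=
    abs_le_of_sq_le_sq (by nlinarith [sq_nonneg (cos (t * α / 2))]) hd0
  have hcos₂ : |cos (t * α / 2)| ≤ d :=
    abs_le_of_sq_le_sq (by nlinarith [sq_nonneg (cos (t / 2))]) hd0
  obtain ⟨k, hk⟩ := exists_int_abs_sub_le_of_abs_cos_le hcos₁
  obtain ⟨m, hm⟩ := exists_int_abs_sub_le_of_abs_cos_le hcos₂
  have hk' : |t - (2 * k + 1) * π| ≤ π * d := by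
    have : t - (2 * k + 1) * π = 2 * (t / 2 - (k + 1 / 2) * π) := by ring
    rw [this, abs_mul, abs_two]; linarith
  have hm' : |t * α - (2 * m + 1) * π| ≤ π * d := by
    have : t * α - (2 * m + 1) * π = 2 * (t * α / 2 - (m + 1 / 2) * π) := by ring
    rw [this, abs_mul, abs_two]; linarith
  obtain ⟨hk_lo, hk_hi⟩ := abs_le.1 hk'
  have hπd : π * d ≤ π := by nlinarith [pi_pos]
  have hk0 : 0 ≤ k := by
    have : (0 : ℝ) < (2 * k + 1) * π := by linarith
    have : (0 : ℝ) < 2 * k + 1 := pos_of_mul_pos_left this pi_pos.le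
    have : (0 : ℤ) < 2 * k + 1 := by exact_mod_cast this
    omega
  lift k to ℕ using hk0
  push_cast at hk' hk_lo hk_hi
  refine ⟨2 * k + 1, 2 * m + 1, ?_, ?_, ?_⟩ <;> push_cast
  · linarith
  · nlinarith [pi_gt_three]
  · exact abs_sub_div_le_of_abs_sub_mul_le pi_pos (by positivity) hk' hm'

theorem one_div_mul_log_rpow_mul_div_le {a s η q t : ℝ} (hs : 0 ≤ s) (hq : 1 < q) (hqt : q ≤ t)
    (ha : a ≤ log t ^ η) :
    1 / (t * log t ^ (s + η)) * a / q ≤ 1 / (q ^ 2 * log q ^ s) := by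
  have hlogq : 0 < log q := log_pos hq
  have hlogt : 0 < log t := log_pos (hq.trans_le hqt)
  have ht : 0 < t := by linarith
  calc 1 / (t * log t ^ (s + η)) * a / q ≤ 1 / (t * log t ^ (s + η)) * log t ^ η / q := by gcongr
    _ = 1 / (q * t * log t ^ s) := by rw [rpow_add hlogt]; field_simp
    _ ≤ 1 / (q ^ 2 * log q ^ s) := by
        gcongr
        rw [sq]
        gcongr

theorem one_div_sq_mul_log_rpow_le_norm {ε α t : ℝ} {Q : ℕ} (hε : 0 < ε)
    (hQ : ∀ q : ℕ, Q ≤ q → ∀ p : ℤ, 1 / ((q : ℝ) ^ 2 * log q ^ (1 + ε / 4)) < |α - p / q|)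
    (ht : (Q + 3) * π ≤ t) (hα : 1 + |α| ≤ log t ^ (ε / 4)) :
    1 / (t ^ 2 * log t ^ (2 + ε))
      ≤ ‖1 + (Complex.exp ((t : ℂ) * Complex.I)
          + Complex.exp ((t : ℂ) * (α : ℂ) * Complex.I)) / 2‖ := by
  have hπt : 3 * π ≤ t := le_trans (by gcongr; linarith [Q.cast_nonneg (α := ℝ)]) ht
  have hlog : 1 ≤ log t := by
    rw [le_log_iff_exp_le (by linarith [pi_pos])]
    linarith [exp_one_lt_d9, pi_gt_three]
  set d := 1 / (t * log t ^ (1 + ε / 4 + ε / 4))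
  have htL : 0 < t * log t ^ (1 + ε / 4 + ε / 4) :=
    mul_pos (by linarith [pi_pos]) (rpow_pos_of_pos (by linarith) _)
  have hd0 : 0 ≤ d := by positivity
  have hd1 : d ≤ 1 := by
    rw [div_le_one htL]
    nlinarith [one_le_rpow hlog (by positivity : (0 : ℝ) ≤ 1 + ε / 4 + ε / 4), pi_gt_three]
  have hd_sq : 1 / (t ^ 2 * log t ^ (2 + ε)) = d ^ 2 := by
    rw [div_pow, mul_pow, ← rpow_natCast (log t ^ _), ← rpow_mul (by linarith)]
    ring_nf
  rw [hd_sq]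
  by_contra! h
  obtain ⟨q, p, htq, hqt, happrox⟩ :=
    exists_approx_of_norm_lt_sq (by linarith [pi_pos]) hd0 hd1 h
  -- the margin `3 π` gives `q ≥ 2`, away from the junk value at `log 1 = 0`
  have hQq : Q + 2 ≤ q := by
    have : ((Q + 2 : ℕ) : ℝ) ≤ q := by
      push_cast
      nlinarith [pi_pos]
    exact_mod_cast this
  have hq1 : (1 : ℝ) < q := by exact_mod_cast (by omega : 1 < q)
  refine (hQ q (by omega) p).not_ge (happrox.trans ?_)
  exact one_div_mul_log_rpow_mul_div_le (by positivity) hq1 hqt hα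

/-- For every `ε > 0`, for Lebesgue almost every `α ∈ ℝ` there is `t₀ > 0` such that
`1/(t² (log t)^{2+ε}) ≤ |1 + (e^{it} + e^{itα})/2|` for all `t ≥ t₀`. -/
theorem ae_g_lower_bound (ε : ℝ) (hε : 0 < ε) :
    ∀ᵐ (α : ℝ) ∂(volume : Measure ℝ), ∃ t₀ : ℝ, 0 < t₀ ∧ ∀ t : ℝ, t₀ ≤ t →
      1 / (t ^ 2 * Real.log t ^ (2 + ε))
        ≤ ‖1 + (Complex.exp ((t : ℂ) * Complex.I)
            + Complex.exp ((t : ℂ) * (α : ℂ) * Complex.I)) / 2‖ := by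
  have hψ : Summable fun q : ℕ => (q : ℝ) * (1 / ((q : ℝ) ^ 2 * log q ^ (1 + ε / 4))) := by
    refine (summable_one_div_nat_mul_log_rpow (by linarith : 1 < 1 + ε / 4)).congr fun q => ?_
    rcases eq_or_ne (q : ℝ) 0 with hq | hq
    · simp [hq]
    · field_simp
  filter_upwards [ae_eventually_forall_lt_abs_sub_div (fun q => by positivity) hψ] with α hα
  obtain ⟨Q, hQ⟩ := eventually_atTop.1 hα
  have hlog : Tendsto (fun t => log t ^ (ε / 4)) atTop atTop :=
    (tendsto_rpow_atTop (by positivity)).comp tendsto_log_atTop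
  obtain ⟨t₀, ht₀⟩ := eventually_atTop.1
    ((eventually_ge_atTop ((Q + 3) * π)).and (hlog.eventually_ge_atTop (1 + |α|)))
  refine ⟨max t₀ 1, by positivity, fun t ht => ?_⟩
  obtain ⟨htQ, htα⟩ := ht₀ t (le_of_max_le_left ht)
  exact one_div_sq_mul_log_rpow_le_norm hε hQ htQ htα
end

section
/- Let α be irrational with convergents p_{n−1}/q_{n−1}, p_n/q_n, p_{n+1}/q_{n+1} for some n ≥ 2. Then there exist odd integers u, v with q_{n−1} ≤ v ≤ q_{n+1} such that |α − u/v| < 2/v². -/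
/-! If `p/q`, `p'/q'` are consecutive convergents of `α` and `x > 1` is the next complete
quotient, then `α = (x p' + p) / (x q' + q)` and `p q' - p' q = ±1`. As this determinant is odd,
one of `p/q`, `p'/q'` and the mediant `(p + p')/(q + q')` has odd numerator and denominator. The
convergents satisfy `|α - p'/q'| < 1/q'²`, and the error of the mediant,
`(x - 1) / ((x q' + q)(q + q'))`, is below `2/(q + q')²` because `q ≤ q'`. -/

/-- Complete quotients of the continued fraction expansion of `α`. -/
noncomputable def cfCQ (α : ℝ) : ℕ → ℝ
  | 0 => α
  | n + 1 => 1 / (cfCQ α n - ⌊cfCQ α n⌋)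

/-- Partial quotients `a n` of the continued fraction expansion of `α`. -/
noncomputable def cfA (α : ℝ) (n : ℕ) : ℤ := ⌊cfCQ α n⌋

/-- Numerators `p n` of the convergents of the continued fraction expansion of `α`. -/
noncomputable def cfP (α : ℝ) : ℕ → ℤ
  | 0 => cfA α 0
  | 1 => cfA α 0 * cfA α 1 + 1
  | n + 2 => cfA α (n + 2) * cfP α (n + 1) + cfP α n

/-- Denominators `q n` of the convergents of the continued fraction expansion of `α`. -/
noncomputable def cfQ (α : ℝ) : ℕ → ℤ
  | 0 => 1
  | 1 => cfA α 1
  | n + 2 => cfA α (n + 2) * cfQ α (n + 1) + cfQ α n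

-- Modulo 2, `(p, q)` and `(p', q')` form a basis of `(ZMod 2)²`; together with their sum they
-- are its three nonzero vectors.
theorem odd_and_odd_or_odd_and_odd_or_odd_add_and_odd_add {p q p' q' : ℤ}
    (h : Odd (p * q' - p' * q)) :
    (Odd p ∧ Odd q) ∨ (Odd p' ∧ Odd q') ∨ (Odd (p + p') ∧ Odd (q + q')) := by
  rcases Int.even_or_odd p with hp | hp <;> rcases Int.even_or_odd q with hq | hq <;>
    rcases Int.even_or_odd p' with hp' | hp' <;> rcases Int.even_or_odd q' with hq' | hq' <;>
    simp_all [← Int.not_even_iff_odd, parity_simps]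

section Approximation

variable {α x p q p' q' : ℝ}

theorem abs_sub_div_lt_one_div_sq (hx : 1 < x) (hq : 0 ≤ q) (hq' : 0 < q')
    (hdet : |p * q' - p' * q| = 1) (hα : α * (x * q' + q) = x * p' + p) :
    |α - p' / q'| < 1 / q' ^ 2 := by
  have hX : q' < x * q' + q := by nlinarith
  have herr : α - p' / q' = (p * q' - p' * q) / (q' * (x * q' + q)) := by
    field_simp
    linear_combination q' * hα
  rw [herr, abs_div, hdet, abs_of_pos (by positivity), sq]
  gcongr

theorem abs_sub_mediant_lt_two_div_sq (hx : 1 < x) (hq : 0 ≤ q) (hqq' : q ≤ q') (hq' : 0 < q')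
    (hdet : |p * q' - p' * q| = 1) (hα : α * (x * q' + q) = x * p' + p) :
    |α - (p + p') / (q + q')| < 2 / (q + q') ^ 2 := by
  have hX : 0 < x * q' + q := by nlinarith
  have herr :
      α - (p + p') / (q + q') = (1 - x) * (p * q' - p' * q) / ((x * q' + q) * (q + q')) := by
    field_simp
    linear_combination (q + q') * hα
  rw [herr, abs_div, abs_mul, hdet, abs_sub_comm, abs_of_pos (sub_pos.2 hx), mul_one,
    abs_of_pos (by positivity), div_lt_div_iff₀ (by positivity) (by positivity)]
  nlinarith [mul_le_mul_of_nonneg_left hqq' (by linarith : (0 : ℝ) ≤ x)]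

end Approximation

namespace ContinuedFraction

variable {α : ℝ}

theorem irrational_cfCQ (hα : Irrational α) : ∀ n, Irrational (cfCQ α n)
  | 0 => hα
  | n + 1 => by
    rw [cfCQ, one_div]
    exact ((irrational_cfCQ hα n).sub_intCast _).inv

theorem cfCQ_sub_floor_pos (hα : Irrational α) (n : ℕ) : 0 < cfCQ α n - ⌊cfCQ α n⌋ :=
  sub_pos.2 <| (Int.floor_le _).lt_of_ne ((irrational_cfCQ hα n).ne_int _).symm

theorem one_lt_cfCQ_succ (hα : Irrational α) (n : ℕ) : 1 < cfCQ α (n + 1) := by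
  rw [cfCQ, lt_one_div one_pos (cfCQ_sub_floor_pos hα n), div_one, sub_lt_iff_lt_add']
  exact Int.lt_floor_add_one _

theorem cfCQ_succ_mul_sub_cfA (hα : Irrational α) (n : ℕ) :
    cfCQ α (n + 1) * (cfCQ α n - cfA α n) = 1 :=
  one_div_mul_cancel (cfCQ_sub_floor_pos hα n).ne'

theorem one_le_cfA_succ (hα : Irrational α) (n : ℕ) : 1 ≤ cfA α (n + 1) :=
  Int.le_floor.2 <| by exact_mod_cast (one_lt_cfCQ_succ hα n).le

theorem one_le_cfQ_and_one_le_cfQ_succ (hα : Irrational α) :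
    ∀ n, 1 ≤ cfQ α n ∧ 1 ≤ cfQ α (n + 1)
  | 0 => ⟨le_rfl, one_le_cfA_succ hα 0⟩
  | n + 1 => by
    obtain ⟨h₀, h₁⟩ := one_le_cfQ_and_one_le_cfQ_succ hα n
    refine ⟨h₁, ?_⟩
    have ha := one_le_cfA_succ hα (n + 1)
    rw [cfQ]
    nlinarith

theorem one_le_cfQ (hα : Irrational α) (n : ℕ) : 1 ≤ cfQ α n :=
  (one_le_cfQ_and_one_le_cfQ_succ hα n).1

theorem cfQ_add_cfQ_succ_le (hα : Irrational α) (n : ℕ) :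
    cfQ α n + cfQ α (n + 1) ≤ cfQ α (n + 2) := by
  have ha := one_le_cfA_succ hα (n + 1)
  have hq := one_le_cfQ hα (n + 1)
  rw [cfQ]
  nlinarith

theorem cfQ_le_cfQ_succ (hα : Irrational α) : ∀ n, cfQ α n ≤ cfQ α (n + 1)
  | 0 => one_le_cfA_succ hα 0
  | n + 1 => by linarith [cfQ_add_cfQ_succ_le hα n, one_le_cfQ hα n]

theorem cfP_mul_cfQ_succ_sub (α : ℝ) :
    ∀ n, cfP α n * cfQ α (n + 1) - cfP α (n + 1) * cfQ α n = (-1) ^ (n + 1)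
  | 0 => by simp [cfP, cfQ]
  | n + 1 => by
    rw [cfP, cfQ]
    linear_combination -cfP_mul_cfQ_succ_sub α n

theorem mul_cfCQ_mul_cfQ_add (hα : Irrational α) : ∀ n,
    α * (cfCQ α (n + 2) * cfQ α (n + 1) + cfQ α n) = cfCQ α (n + 2) * cfP α (n + 1) + cfP α n
  | 0 => by
    have h₀ := cfCQ_succ_mul_sub_cfA hα 0
    have h₁ := cfCQ_succ_mul_sub_cfA hα 1
    rw [cfCQ] at h₀
    simp only [cfP, cfQ]
    push_cast
    linear_combination cfCQ α 2 * h₀ - (α - cfA α 0) * h₁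
  | n + 1 => by
    have ih := mul_cfCQ_mul_cfQ_add hα n
    have h := cfCQ_succ_mul_sub_cfA hα (n + 2)
    rw [cfP, cfQ]
    push_cast
    linear_combination cfCQ α (n + 3) * ih + (cfP α (n + 1) - α * cfQ α (n + 1)) * h

theorem abs_cfP_mul_cfQ_succ_sub (α : ℝ) (n : ℕ) :
    |(cfP α n : ℝ) * cfQ α (n + 1) - cfP α (n + 1) * cfQ α n| = 1 := by
  have h : ((cfP α n * cfQ α (n + 1) - cfP α (n + 1) * cfQ α n : ℤ) : ℝ) = (-1) ^ (n + 1) :=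
    mod_cast cfP_mul_cfQ_succ_sub α n
  push_cast at h
  rw [h, abs_neg_one_pow]

theorem abs_sub_cfP_div_cfQ_lt (hα : Irrational α) (n : ℕ) :
    |α - cfP α (n + 1) / cfQ α (n + 1)| < 1 / (cfQ α (n + 1) : ℝ) ^ 2 :=
  abs_sub_div_lt_one_div_sq (one_lt_cfCQ_succ hα (n + 1))
    (by exact_mod_cast (zero_lt_one.trans_le (one_le_cfQ hα n)).le)
    (by exact_mod_cast zero_lt_one.trans_le (one_le_cfQ hα (n + 1)))
    (abs_cfP_mul_cfQ_succ_sub α n) (mul_cfCQ_mul_cfQ_add hα n)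

theorem abs_sub_mediant_cfP_div_cfQ_lt (hα : Irrational α) (n : ℕ) :
    |α - (cfP α n + cfP α (n + 1)) / (cfQ α n + cfQ α (n + 1))| <
      2 / ((cfQ α n : ℝ) + cfQ α (n + 1)) ^ 2 :=
  abs_sub_mediant_lt_two_div_sq (one_lt_cfCQ_succ hα (n + 1))
    (by exact_mod_cast (zero_lt_one.trans_le (one_le_cfQ hα n)).le)
    (by exact_mod_cast cfQ_le_cfQ_succ hα n)
    (by exact_mod_cast zero_lt_one.trans_le (one_le_cfQ hα (n + 1)))
    (abs_cfP_mul_cfQ_succ_sub α n) (mul_cfCQ_mul_cfQ_add hα n)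

end ContinuedFraction

open ContinuedFraction in
/-- For irrational `α` and `n ≥ 2` there are odd integers `u, v` with
`q (n-1) ≤ v ≤ q (n+1)` and `|α - u/v| < 2/v²`. -/
theorem oddOdd_approx_between_denominators (α : ℝ) (hα : Irrational α) (n : ℕ) (hn : 2 ≤ n) :
    ∃ u v : ℤ, Odd u ∧ Odd v ∧ cfQ α (n - 1) ≤ v ∧ v ≤ cfQ α (n + 1) ∧
      |α - (u : ℝ) / (v : ℝ)| < 2 / (v : ℝ) ^ 2 := by
  obtain ⟨k, rfl⟩ : ∃ k, n = k + 2 := ⟨n - 2, by omega⟩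
  rw [show k + 2 - 1 = k + 1 from rfl]
  have hdet : Odd (cfP α (k + 1) * cfQ α (k + 2) - cfP α (k + 2) * cfQ α (k + 1)) := by
    rw [cfP_mul_cfQ_succ_sub]
    exact odd_one.neg.pow
  have hq₁₂ := cfQ_le_cfQ_succ hα (k + 1)
  have hq₂₃ := cfQ_le_cfQ_succ hα (k + 2)
  rcases odd_and_odd_or_odd_and_odd_or_odd_add_and_odd_add hdet with
    ⟨hu, hv⟩ | ⟨hu, hv⟩ | ⟨hu, hv⟩
  · refine ⟨_, _, hu, hv, le_rfl, hq₁₂.trans hq₂₃, ?_⟩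
    exact (abs_sub_cfP_div_cfQ_lt hα k).trans_le (by gcongr; norm_num)
  · refine ⟨_, _, hu, hv, hq₁₂, hq₂₃, ?_⟩
    exact (abs_sub_cfP_div_cfQ_lt hα (k + 1)).trans_le (by gcongr; norm_num)
  · refine ⟨_, _, hu, hv, by linarith [one_le_cfQ hα (k + 2)],
      cfQ_add_cfQ_succ_le hα (k + 1), ?_⟩
    push_cast
    exact abs_sub_mediant_cfP_div_cfQ_lt hα (k + 1)
end

section
/- For every irrational α ∈ ℝ there exist infinitely many pairs of odd integers u, v with v ≥ 1 such that |α − u/v| < 2/v². -/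
open Set


open Set

lemma finite_small_den (α : ℝ) (N : ℕ) :
    {q : ℚ | |α - (q:ℝ)| < 1 / (q.den : ℝ) ^ 2 ∧ q.den ≤ N}.Finite := by
  set M : ℤ := ⌈(|α| + 1) * N⌉ with hM
  have hsub : {q : ℚ | |α - (q:ℝ)| < 1 / (q.den : ℝ) ^ 2 ∧ q.den ≤ N} ⊆
      (fun q : ℚ => (q.num, (q.den : ℤ))) ⁻¹' (Set.Icc (-M) M ×ˢ Set.Icc 1 (N : ℤ)) := by
    rintro q ⟨h1, h2⟩
    have hden : (1:ℝ) ≤ q.den := by exact_mod_cast q.pos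
    have hq1 : |α - (q:ℝ)| < 1 := by
      refine h1.trans_le ?_
      rw [div_le_one (by positivity)]
      nlinarith
    have habs : |(q:ℝ)| ≤ |α| + 1 := by
      have := abs_sub_abs_le_abs_sub (q:ℝ) α
      rw [abs_sub_comm] at hq1
      linarith
    have hnum : |(q.num : ℝ)| ≤ (|α| + 1) * N := by
      have : (q:ℝ) = (q.num : ℝ) / (q.den : ℝ) := by rw [Rat.cast_def]
      rw [this, abs_div, abs_of_pos (by linarith : (0:ℝ) < (q.den:ℝ)), div_le_iff₀ (by linarith)] at habs
      refine habs.trans ?_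
      have hN : (q.den : ℝ) ≤ N := by exact_mod_cast h2
      nlinarith [abs_nonneg α]
    constructor
    · simp only [Set.mem_Icc]
      have hM' : ((|α| + 1) * N : ℝ) ≤ (M : ℝ) := by
        exact_mod_cast Int.le_ceil _
      rw [abs_le] at hnum
      have e1 : (-(M:ℝ)) ≤ (q.num : ℝ) := by linarith
      have e2 : (q.num : ℝ) ≤ (M:ℝ) := by linarith
      exact ⟨by exact_mod_cast e1, by exact_mod_cast e2⟩
    · simp only [Set.mem_Icc]
      exact ⟨by exact_mod_cast q.pos, by exact_mod_cast h2⟩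
  refine Set.Finite.subset (Set.Finite.preimage ?_ ((Set.finite_Icc _ _).prod (Set.finite_Icc _ _))) hsub
  intro a _ b _ h
  simp only [Prod.mk.injEq] at h
  exact Rat.ext h.1 (by exact_mod_cast h.2)

lemma exists_large_den (α : ℝ) (hα : Irrational α) (N : ℕ) :
    ∃ q : ℚ, |α - (q:ℝ)| < 1 / (q.den : ℝ) ^ 2 ∧ N < q.den := by
  by_contra h
  push_neg at h
  have : {q : ℚ | |α - (q:ℝ)| < 1 / (q.den : ℝ) ^ 2} ⊆
      {q : ℚ | |α - (q:ℝ)| < 1 / (q.den : ℝ) ^ 2 ∧ q.den ≤ N} := fun q hq => ⟨hq, h q hq⟩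
  exact (Real.infinite_rat_abs_sub_lt_one_div_den_sq_of_irrational hα).mono this
    (finite_small_den α N)

lemma pair_bound (α : ℝ) (p d u v : ℤ) (hd2 : 2 ≤ d) (hv : 1 ≤ v) (hvd : v < d)
    (hdet : p * v - u * d = 1 ∨ p * v - u * d = -1)
    (happrox : |α - (p:ℝ)/(d:ℝ)| < 1/(d:ℝ)^2) :
    |α - (u:ℝ)/(v:ℝ)| < 2/(v:ℝ)^2 ∧ |α - (u:ℝ)/(v:ℝ)| < 2/(d:ℝ) := by
  have hdR : (2:ℝ) ≤ (d:ℝ) := by exact_mod_cast hd2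
  have hvR : (1:ℝ) ≤ (v:ℝ) := by exact_mod_cast hv
  have hvdR : (v:ℝ) < (d:ℝ) := by exact_mod_cast hvd
  have hdpos : (0:ℝ) < d := by linarith
  have hvpos : (0:ℝ) < v := by linarith
  have hdiff : (p:ℝ)/(d:ℝ) - (u:ℝ)/(v:ℝ) = ((p*v - u*d : ℤ):ℝ) / ((d:ℝ)*(v:ℝ)) := by
    push_cast
    field_simp
  have habs1 : |((p*v - u*d : ℤ):ℝ)| = 1 := by
    rcases hdet with h | h <;> rw [h] <;> norm_num
  have hmid : |(p:ℝ)/(d:ℝ) - (u:ℝ)/(v:ℝ)| = 1 / ((d:ℝ)*(v:ℝ)) := by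
    rw [hdiff, abs_div, habs1, abs_of_pos (by positivity)]
  have htri : |α - (u:ℝ)/(v:ℝ)| ≤ |α - (p:ℝ)/(d:ℝ)| + |(p:ℝ)/(d:ℝ) - (u:ℝ)/(v:ℝ)| :=
    abs_sub_le _ _ _
  rw [hmid] at htri
  constructor
  · have h1 : (1:ℝ)/(d:ℝ)^2 < 1/(v:ℝ)^2 := by
      apply div_lt_div_of_pos_left one_pos (by positivity)
      nlinarith
    have h2 : (1:ℝ)/((d:ℝ)*(v:ℝ)) < 1/(v:ℝ)^2 := by
      apply div_lt_div_of_pos_left one_pos (by positivity)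
      nlinarith
    have : 2/(v:ℝ)^2 = 1/(v:ℝ)^2 + 1/(v:ℝ)^2 := by ring
    linarith
  · have h1 : (1:ℝ)/(d:ℝ)^2 ≤ 1/(d:ℝ) := by
      apply div_le_div_of_nonneg_left one_pos.le hdpos
      nlinarith
    have h2 : (1:ℝ)/((d:ℝ)*(v:ℝ)) ≤ 1/(d:ℝ) := by
      apply div_le_div_of_nonneg_left one_pos.le hdpos
      nlinarith
    have : 2/(d:ℝ) = 1/(d:ℝ) + 1/(d:ℝ) := by ring
    linarith

lemma bezout_odd (p d : ℤ) (hd2 : 2 ≤ d) (hcop : IsCoprime p d) (hno : ¬(Odd p ∧ Odd d)) :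
    ∃ u v : ℤ, Odd u ∧ Odd v ∧ 1 ≤ v ∧ v < d ∧ (p * v - u * d = 1 ∨ p * v - u * d = -1) := by
  obtain ⟨x, y, hxy⟩ := hcop
  set b := x % d with hb
  have hdpos : 0 < d := by omega
  have hb0 : 0 ≤ b := Int.emod_nonneg x (by omega)
  have hbd : b < d := Int.emod_lt_of_pos x hdpos
  have hdvd : d ∣ p * b - 1 := by
    have h1 : d ∣ x - b := Int.dvd_self_sub_of_emod_eq rfl
    have h2 : d ∣ p * (x - b) := h1.mul_left p
    have h3 : p * x - 1 = -(y * d) := by linarith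
    have h4 : d ∣ p * x - 1 := by rw [h3]; exact (dvd_mul_left d y).neg_right
    have : p * b - 1 = (p * x - 1) - p * (x - b) := by ring
    rw [this]; exact dvd_sub h4 h2
  set a := (p * b - 1) / d with ha
  have key : p * b - a * d = 1 := by
    have h := Int.ediv_mul_cancel hdvd
    linarith
  have hbne : b ≠ 0 := by
    intro h
    rw [h] at key
    have : a * d = -1 := by linarith
    have : d ∣ 1 := ⟨-a, by linarith⟩
    have := Int.le_of_dvd one_pos this
    omega
  have hb1 : 1 ≤ b := by omega
  -- parity analysis
  have hne : ¬(Even p ∧ Even d) := by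
    rintro ⟨⟨p2, hp2⟩, ⟨d2, hd2'⟩⟩
    have : (2:ℤ) ∣ 1 := ⟨p2 * b - a * d2, by rw [← key, hp2, hd2']; ring⟩
    norm_num at this
  rcases Int.even_or_odd p with hp | hp
  · -- p even, so d odd; then a*d = p*b-1 odd, so a odd
    have hd : Odd d := by
      rcases Int.even_or_odd d with h | h
      · exact absurd ⟨hp, h⟩ hne
      · exact h
    have hao : Odd a := by
      have h1 : Odd (a * d) := by
        have : a * d = p * b - 1 := by linarith
        rw [this]
        rcases hp with ⟨k, hk⟩
        exact ⟨k * b - 1, by rw [hk]; ring⟩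
      exact (Int.odd_mul.mp h1).1
    rcases Int.even_or_odd b with hbe | hbo
    · -- use (p - a, d - b)
      refine ⟨p - a, d - b, ?_, ?_, by omega, by omega, ?_⟩
      · rcases hp with ⟨k, hk⟩; rcases hao with ⟨m, hm⟩
        exact ⟨k - m - 1, by omega⟩
      · rcases hd with ⟨k, hk⟩; rcases hbe with ⟨m, hm⟩
        exact ⟨k - m, by omega⟩
      · right; nlinarith [key]
    · refine ⟨a, b, hao, hbo, hb1, hbd, Or.inl key⟩
  · -- p odd, so d even (since not both odd); p*b odd so b odd
    have hd : Even d := by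
      rcases Int.even_or_odd d with h | h
      · exact h
      · exact absurd ⟨hp, h⟩ hno
    have hbo : Odd b := by
      have h1 : Odd (p * b) := by
        have : p * b = a * d + 1 := by linarith
        rw [this]
        rcases hd with ⟨k, hk⟩
        exact ⟨a * k, by rw [hk]; ring⟩
      exact (Int.odd_mul.mp h1).2
    rcases Int.even_or_odd a with hae | hao
    · refine ⟨p - a, d - b, ?_, ?_, by omega, by omega, ?_⟩
      · rcases hp with ⟨k, hk⟩; rcases hae with ⟨m, hm⟩
        exact ⟨k - m, by omega⟩
      · rcases hd with ⟨k, hk⟩; rcases hbo with ⟨m, hm⟩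
        exact ⟨k - m - 1, by omega⟩
      · right; nlinarith [key]
    · exact ⟨a, b, hao, hbo, hb1, hbd, Or.inl key⟩

lemma exists_good_pair (α : ℝ) (hα : Irrational α) (ε : ℝ) (hε : 0 < ε) :
    ∃ u v : ℤ, Odd u ∧ Odd v ∧ 1 ≤ v ∧
      |α - (u:ℝ)/(v:ℝ)| < 2/(v:ℝ)^2 ∧ |α - (u:ℝ)/(v:ℝ)| < ε := by
  obtain ⟨N, hN⟩ := exists_nat_gt (2 / ε)
  obtain ⟨q, hq, hden⟩ := exists_large_den α hα (max N 1)
  obtain ⟨p, d, hp, hd⟩ : ∃ p d : ℤ, p = q.num ∧ d = (q.den : ℤ) := ⟨_, _, rfl, rfl⟩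
  have hden1 : 1 < q.den := lt_of_le_of_lt (le_max_right N 1) hden
  have hd1 : (1:ℤ) < d := by rw [hd]; exact_mod_cast hden1
  have hd2 : 2 ≤ d := by omega
  have hdR : (0:ℝ) < (d:ℝ) := by exact_mod_cast (by omega : (0:ℤ) < d)
  have hdR2 : (2:ℝ) ≤ (d:ℝ) := by exact_mod_cast hd2
  have hdε : 2 / (d:ℝ) < ε := by
    have h1 : (N:ℝ) < (d:ℝ) := by
      rw [hd]
      exact_mod_cast lt_of_le_of_lt (le_max_left N 1) hden
    have h3 : 2 < (N:ℝ) * ε := by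
      rw [div_lt_iff₀ hε] at hN; linarith
    rw [div_lt_iff₀ hdR]
    nlinarith [hε, h1, h3]
  have hdd : (d:ℝ) = (q.den:ℝ) := by rw [hd]; push_cast; rfl
  have happrox : |α - (p:ℝ)/(d:ℝ)| < 1/(d:ℝ)^2 := by
    have hc : (q:ℝ) = (p:ℝ)/(d:ℝ) := by rw [Rat.cast_def, hp, hd]; push_cast; rfl
    rw [← hc, hdd]
    exact hq
  have hs2 : (0:ℝ) < (d:ℝ)^2 := by positivity
  by_cases hodd : Odd p ∧ Odd d
  · refine ⟨p, d, hodd.1, hodd.2, by omega, ?_, ?_⟩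
    · refine lt_trans happrox ?_
      rw [div_lt_div_iff₀ hs2 hs2]; nlinarith
    · refine lt_trans (lt_of_lt_of_le happrox ?_) hdε
      rw [div_le_div_iff₀ hs2 hdR]; nlinarith
  · have hcop : IsCoprime p d := by
      rw [hp, hd, Int.isCoprime_iff_gcd_eq_one]
      have := q.reduced
      simpa [Int.gcd] using this
    obtain ⟨u, v, hu, hv, hv1, hvd, hdet⟩ := bezout_odd p d hd2 hcop hodd
    obtain ⟨h1, h2⟩ := pair_bound α p d u v hd2 hv1 hvd hdet happrox
    exact ⟨u, v, hu, hv, hv1, h1, h2.trans hdε⟩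

/-- For every irrational `α` there exist infinitely many pairs of odd integers `u, v`
with `v ≥ 1` such that `|α - u/v| < 2/v²`. -/
theorem infinitely_many_oddOdd_approx (α : ℝ) (hα : Irrational α) :
    {p : ℤ × ℤ | Odd p.1 ∧ Odd p.2 ∧ 1 ≤ p.2 ∧
      |α - (p.1 : ℝ) / (p.2 : ℝ)| < 2 / (p.2 : ℝ) ^ 2}.Infinite := by
  set S := {p : ℤ × ℤ | Odd p.1 ∧ Odd p.2 ∧ 1 ≤ p.2 ∧
      |α - (p.1 : ℝ) / (p.2 : ℝ)| < 2 / (p.2 : ℝ) ^ 2} with hS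
  by_contra hinf
  rw [Set.not_infinite] at hinf
  have hfin := hinf
  have hpos : ∀ r ∈ S, 0 < |α - (r.1 : ℝ) / (r.2 : ℝ)| := by
    rintro ⟨u, v⟩ ⟨-, -, hv1, -⟩
    rw [abs_pos, sub_ne_zero]
    have : ((u:ℝ)/(v:ℝ)) = (((u/v : ℚ)) : ℝ) := by push_cast; ring
    rw [this]
    exact hα.ne_rat _
  have hex : ∃ δ > 0, ∀ r ∈ S, δ ≤ |α - (r.1 : ℝ) / (r.2 : ℝ)| := by
    rcases Set.eq_empty_or_nonempty S with h | h
    · exact ⟨1, one_pos, by rw [h]; simp⟩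
    · obtain ⟨r0, hr0⟩ := h
      have hne : hfin.toFinset.Nonempty := ⟨r0, hfin.mem_toFinset.mpr hr0⟩
      obtain ⟨r, hrmem, hrmin⟩ := hfin.toFinset.exists_min_image
        (fun r => |α - (r.1 : ℝ) / (r.2 : ℝ)|) hne
      refine ⟨_, hpos r (hfin.mem_toFinset.mp hrmem), fun s hs => hrmin s (hfin.mem_toFinset.mpr hs)⟩
  obtain ⟨δ, hδ, hmin⟩ := hex
  obtain ⟨u, v, hu, hv, hv1, hb, hlt⟩ := exists_good_pair α hα δ hδ
  have hmem : (u, v) ∈ S := ⟨hu, hv, hv1, hb⟩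
  exact absurd (hmin (u, v) hmem) (not_le.mpr hlt)
end

section
/- Let α ∈ ℝ be badly approximable (there is c > 0 with |α − p/q| ≥ c/q² for all integers p, q with q ≠ 0). Let v₁ < v₂ < … be the strictly increasing enumeration of the set of odd positive integers v for which there exists an odd positive integer u with |vα − u| ≤ 2/v. Then there exists C ≥ 1 such that v_{n+1} ≤ C·v_n for all n. -/
/-!
With `γ = (α + 1) / 2`, an odd `q` with `|qγ - m| ≤ 1/q` yields the odd integer `u = 2m - q`
with `|qα - u| ≤ 2/q`, and `γ` is badly approximable along with `α`. Writing
`‖y‖ = |y - round y|`, given a scale `w` let `q₁` be the least denominator with `‖q₁γ‖ < c/w`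
and `q₂` the least one with `‖q₂γ‖ < ‖q₁γ‖`. By Dirichlet's theorem `q₁, q₂` are consecutive
best approximations, so `q₁p₂ - q₂p₁ = ±1`: they are coprime, hence one of them is odd. Bad
approximability forces both into `(w, O(w)]`, which bounds the gap following any element of
the sequence.
-/

theorem exists_min_pos_abs_mul_sub_round_lt (x : ℝ) {δ : ℝ} (hδ : 0 < δ) :
    ∃ q : ℕ, 0 < q ∧ |q * x - round (q * x)| < δ ∧
      ∀ q' : ℕ, 0 < q' → q' < q → δ ≤ |q' * x - round (q' * x)| := by
  classical
  have hex : ∃ q : ℕ, 0 < q ∧ |q * x - round (q * x)| < δ := by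
    obtain ⟨N, hN⟩ := exists_nat_gt (1 / δ)
    have hN0 : 0 < N := by exact_mod_cast (one_div_pos.2 hδ).trans hN
    obtain ⟨q, hq, -, hqx⟩ := Real.exists_nat_abs_mul_sub_round_le x hN0
    refine ⟨q, hq, hqx.trans_lt ?_⟩
    rw [div_lt_iff₀ (by positivity)]
    rw [div_lt_iff₀ hδ] at hN
    nlinarith
  refine ⟨Nat.find hex, (Nat.find_spec hex).1, (Nat.find_spec hex).2, fun q' hq' hlt => ?_⟩
  exact not_lt.1 fun h => Nat.find_min hex hlt ⟨hq', h⟩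

theorem le_one_div_of_forall_le_abs_mul_sub_round (x : ℝ) {δ : ℝ} {Q : ℕ} (hQ : 2 ≤ Q)
    (h : ∀ q : ℕ, 0 < q → q < Q → δ ≤ |q * x - round (q * x)|) : δ ≤ 1 / Q := by
  obtain ⟨q, hq, hqQ, hqx⟩ := Real.exists_nat_abs_mul_sub_round_le x (n := Q - 1) (by omega)
  rw [Nat.cast_sub (by omega), Nat.cast_one, sub_add_cancel] at hqx
  exact (h q hq (by omega)).trans hqx

theorem coprime_of_abs_mul_sub_lt (x : ℝ) {q₁ q₂ : ℕ} {p₁ p₂ : ℤ} (hq₁ : 0 < q₁) (hq : q₁ ≤ q₂)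
    (h₂ : |q₂ * x - p₂| < |q₁ * x - p₁|) (h₁ : |q₁ * x - p₁| ≤ 1 / q₂) :
    Nat.Coprime q₁ q₂ := by
  have hq₁R : (0 : ℝ) < q₁ := by exact_mod_cast hq₁
  have hqR : (q₁ : ℝ) ≤ q₂ := by exact_mod_cast hq
  -- the integer `q₁p₂ - q₂p₁` is nonzero and of absolute value `< 2`, hence `±1`
  have hq₂e₁ : q₂ * |q₁ * x - p₁| ≤ 1 := by
    rwa [le_div_iff₀ (hq₁R.trans_le hqR), mul_comm] at h₁
  have hq₁e₂ : q₁ * |q₂ * x - p₂| < q₂ * |q₁ * x - p₁| :=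
    (mul_lt_mul_of_pos_left h₂ hq₁R).trans_le (mul_le_mul_of_nonneg_right hqR (abs_nonneg _))
  have hD : ((q₁ * p₂ - q₂ * p₁ : ℤ) : ℝ) = q₂ * (q₁ * x - p₁) - q₁ * (q₂ * x - p₂) := by
    push_cast; ring
  have hD0 : q₁ * p₂ - q₂ * p₁ ≠ 0 := by
    intro h0
    rw [h0, Int.cast_zero, eq_comm, sub_eq_zero] at hD
    have := congrArg abs hD
    simp only [abs_mul, Nat.abs_cast] at this
    linarith
  have hD2 : |q₁ * p₂ - q₂ * p₁| < 2 := by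
    have : |((q₁ * p₂ - q₂ * p₁ : ℤ) : ℝ)| < 2 := by
      rw [hD]
      refine (abs_sub _ _).trans_lt ?_
      simp only [abs_mul, Nat.abs_cast]
      linarith
    exact_mod_cast this
  rw [← Nat.isCoprime_iff_coprime]
  rcases abs_lt.1 hD2 with ⟨hlo, hhi⟩
  obtain h | h : q₁ * p₂ - q₂ * p₁ = 1 ∨ q₁ * p₂ - q₂ * p₁ = -1 := by omega
  · exact ⟨p₂, -p₁, by linear_combination h⟩
  · exact ⟨-p₂, p₁, by linear_combination -h⟩

def IsBadlyApproxWith (c x : ℝ) : Prop :=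
  ∀ (p : ℤ) (q : ℕ), 0 < q → c / q ≤ |q * x - p|

theorem exists_coprime_pair_abs_mul_sub_round_le {x c : ℝ} (hc : 0 < c)
    (hx : IsBadlyApproxWith c x) {w : ℝ} (hw : 1 ≤ w) :
    ∃ q₁ q₂ : ℕ, w < q₁ ∧ q₁ < q₂ ∧ (q₂ : ℝ) ≤ w / c ^ 2 ∧ Nat.Coprime q₁ q₂ ∧
      |q₁ * x - round (q₁ * x)| ≤ 1 / q₂ ∧ |q₂ * x - round (q₂ * x)| ≤ 1 / q₂ := by
  have hw0 : 0 < w := by linarith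
  obtain ⟨q₁, hq₁, hq₁w, hq₁min⟩ := exists_min_pos_abs_mul_sub_round_lt x (div_pos hc hw0)
  set e₁ := |q₁ * x - round (q₁ * x)|
  have hq₁R : (0 : ℝ) < q₁ := by exact_mod_cast hq₁
  have hce₁ : c / q₁ ≤ e₁ := hx _ q₁ hq₁
  have hwq₁ : w < q₁ := (div_lt_div_iff_of_pos_left hc hq₁R hw0).1 (hce₁.trans_lt hq₁w)
  have hq₁c : c / w ≤ 1 / q₁ :=
    le_one_div_of_forall_le_abs_mul_sub_round x (by exact_mod_cast hw.trans_lt hwq₁) hq₁min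
  obtain ⟨q₂, hq₂, hq₂e₁, hq₂min⟩ :=
    exists_min_pos_abs_mul_sub_round_lt x ((div_pos hc hq₁R).trans_le hce₁)
  -- below `q₁` every error is at least `c / w > e₁`, so the first improvement on `e₁` comes later
  have hq₁₂ : q₁ < q₂ := by
    by_contra! h
    rcases h.lt_or_eq with h | rfl
    · linarith [hq₁min q₂ hq₂ h]
    · exact lt_irrefl _ hq₂e₁
  have he₁q₂ : e₁ ≤ 1 / q₂ :=
    le_one_div_of_forall_le_abs_mul_sub_round x (by omega) hq₂min
  have hq₂R : (0 : ℝ) < q₂ := by exact_mod_cast hq₂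
  have hq₂w : (q₂ : ℝ) ≤ w / c ^ 2 := by
    have hcq₁ : c * q₁ ≤ w := by rwa [div_le_div_iff₀ hw0 hq₁R, one_mul] at hq₁c
    have hcq₂ : c * q₂ ≤ q₁ := by
      have := hce₁.trans he₁q₂
      rwa [div_le_div_iff₀ hq₁R hq₂R, one_mul] at this
    rw [le_div_iff₀ (by positivity)]
    calc (q₂ : ℝ) * c ^ 2 = (c * q₂) * c := by ring
      _ ≤ q₁ * c := mul_le_mul_of_nonneg_right hcq₂ hc.le
      _ ≤ w := by linarith
  exact ⟨q₁, q₂, hwq₁, hq₁₂, hq₂w, coprime_of_abs_mul_sub_lt x hq₁ hq₁₂.le hq₂e₁ he₁q₂,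
    he₁q₂, hq₂e₁.le.trans he₁q₂⟩

theorem exists_odd_abs_mul_sub_round_le {x c : ℝ} (hc : 0 < c)
    (hx : IsBadlyApproxWith c x) {w : ℝ} (hw : 1 ≤ w) :
    ∃ q : ℕ, Odd q ∧ w < q ∧ (q : ℝ) ≤ w / c ^ 2 ∧ |q * x - round (q * x)| ≤ 1 / q := by
  obtain ⟨q₁, q₂, hwq₁, hq₁₂, hq₂w, hcop, he₁, he₂⟩ :=
    exists_coprime_pair_abs_mul_sub_round_le hc hx hw
  have hq₁₂R : (q₁ : ℝ) < q₂ := by exact_mod_cast hq₁₂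
  have hq₁R : (0 : ℝ) < q₁ := by linarith
  rcases Nat.even_or_odd q₁ with h₁ | h₁
  · refine ⟨q₂, ?_, hwq₁.trans hq₁₂R, hq₂w, he₂⟩
    rw [← Nat.not_even_iff_odd]
    intro h₂
    have h2 : 2 ∣ Nat.gcd q₁ q₂ := Nat.dvd_gcd h₁.two_dvd h₂.two_dvd
    rw [hcop.gcd_eq_one] at h2
    omega
  · exact ⟨q₁, h₁, hwq₁, hq₁₂R.le.trans hq₂w,
      he₁.trans (one_div_le_one_div_of_le hq₁R hq₁₂R.le)⟩

def oddOddDenominators (α : ℝ) : Set ℤ :=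
  {w : ℤ | Odd w ∧ 0 < w ∧ ∃ u : ℤ, Odd u ∧ 0 < u ∧ |(w : ℝ) * α - (u : ℝ)| ≤ 2 / (w : ℝ)}

theorem isBadlyApproxWith_add_one_div_two {α c : ℝ}
    (hbad : ∀ p q : ℤ, q ≠ 0 → c / (q : ℝ) ^ 2 ≤ |α - (p : ℝ) / (q : ℝ)|) :
    IsBadlyApproxWith (c / 2) ((α + 1) / 2) := by
  intro p q hq
  have hqR : (0 : ℝ) < q := by exact_mod_cast hq
  have key : (q : ℝ) * ((α + 1) / 2) - p = q / 2 * (α - ((2 * p - q : ℤ) : ℝ) / ((q : ℤ) : ℝ)) := by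
    push_cast
    field_simp
    ring
  have hb := hbad (2 * p - q) q (by exact_mod_cast hq.ne')
  rw [key, abs_mul, abs_of_pos (half_pos hqR)]
  calc c / 2 / q = q / 2 * (c / ((q : ℤ) : ℝ) ^ 2) := by push_cast; field_simp
    _ ≤ _ := mul_le_mul_of_nonneg_left hb (half_pos hqR).le

theorem exists_mem_oddOddDenominators {α c : ℝ} (hc : 0 < c)
    (hbad : ∀ p q : ℤ, q ≠ 0 → c / (q : ℝ) ^ 2 ≤ |α - (p : ℝ) / (q : ℝ)|)
    {w : ℝ} (hw : 1 ≤ w) (hwα : 2 ≤ w * α) :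
    ∃ b ∈ oddOddDenominators α, w < b ∧ (b : ℝ) ≤ w / (c / 2) ^ 2 := by
  obtain ⟨q, hq, hwq, hqw, hqx⟩ := exists_odd_abs_mul_sub_round_le (half_pos hc)
    (isBadlyApproxWith_add_one_div_two hbad) hw
  set m := round ((q : ℝ) * ((α + 1) / 2))
  have hqR : (1 : ℝ) < q := hw.trans_lt hwq
  have hα : 0 < α := pos_of_mul_pos_right (by linarith : 0 < w * α) (by linarith)
  have hu : |(q : ℝ) * α - ((2 * m - q : ℤ) : ℝ)| ≤ 2 / q := by
    have : (q : ℝ) * α - ((2 * m - q : ℤ) : ℝ) = 2 * ((q : ℝ) * ((α + 1) / 2) - m) := by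
      push_cast; ring
    rw [this, abs_mul, abs_two, ← mul_one_div 2]
    gcongr
  have hqα : 2 < (q : ℝ) * α := hwα.trans_lt (mul_lt_mul_of_pos_right hwq hα)
  have h2q : 2 / (q : ℝ) < 2 := by rw [div_lt_iff₀ (by linarith)]; linarith
  refine ⟨q, ⟨by exact_mod_cast hq, by exact_mod_cast hq.pos, 2 * m - q,
    (even_two_mul m).sub_odd (by exact_mod_cast hq), ?_, by rw [Int.cast_natCast]; exact hu⟩,
    by exact_mod_cast hwq, by exact_mod_cast hqw⟩
  have : (0 : ℝ) < ((2 * m - q : ℤ) : ℝ) := by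
    linarith [le_abs_self ((q : ℝ) * α - ((2 * m - q : ℤ) : ℝ))]
  exact_mod_cast this

theorem pos_of_strictMono_of_range_eq_oddOddDenominators {α : ℝ} {v : ℕ → ℤ}
    (hmono : StrictMono v) (hrange : Set.range v = oddOddDenominators α) : 0 < α := by
  have hmem (n : ℕ) : v n ∈ oddOddDenominators α := hrange ▸ Set.mem_range_self n
  have hv₁ : 2 < v 1 := by
    obtain ⟨k, hk⟩ := (hmem 1).1
    have := (hmem 0).2.1
    have := hmono zero_lt_one
    omega
  obtain ⟨-, -, u, -, hu, hvu⟩ := hmem 1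
  by_contra! hα
  have hvR : (2 : ℝ) < v 1 := by exact_mod_cast hv₁
  have hu1 : (1 : ℝ) ≤ u := by exact_mod_cast hu
  have h2v : 2 / (v 1 : ℝ) < 1 := by rw [div_lt_one (by linarith)]; linarith
  have hvα : (v 1 : ℝ) * α ≤ 0 := mul_nonpos_of_nonneg_of_nonpos (by linarith) hα
  linarith [neg_le_abs ((v 1 : ℝ) * α - u)]

/-- For badly approximable `α`, the strictly increasing enumeration `v n` of the odd
positive integers `v` admitting an odd positive `u` with `|vα - u| ≤ 2/v` has bounded
ratios: `v (n+1) ≤ C * v n` for some `C ≥ 1`. -/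
theorem oddOdd_denominators_bounded_gaps (α : ℝ)
    (hbad : ∃ c : ℝ, 0 < c ∧ ∀ p q : ℤ, q ≠ 0 → c / (q : ℝ) ^ 2 ≤ |α - (p : ℝ) / (q : ℝ)|)
    (v : ℕ → ℤ) (hmono : StrictMono v)
    (hrange : Set.range v = {w : ℤ | Odd w ∧ 0 < w ∧
      ∃ u : ℤ, Odd u ∧ 0 < u ∧ |(w : ℝ) * α - (u : ℝ)| ≤ 2 / (w : ℝ)}) :
    ∃ C : ℝ, 1 ≤ C ∧ ∀ n : ℕ, (v (n + 1) : ℝ) ≤ C * (v n : ℝ) := by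
  obtain ⟨c, hc, hbad⟩ := hbad
  change Set.range v = oddOddDenominators α at hrange
  have hα : 0 < α := pos_of_strictMono_of_range_eq_oddOddDenominators hmono hrange
  set W := max 1 (2 / α)
  have hW1 : 1 ≤ W := le_max_left _ _
  refine ⟨max 1 (W / (c / 2) ^ 2), le_max_left _ _, fun n => ?_⟩
  have hvn : (1 : ℝ) ≤ v n := by
    exact_mod_cast (hrange ▸ Set.mem_range_self n : v n ∈ oddOddDenominators α).2.1
  obtain ⟨b, hb, hvb, hbw⟩ := exists_mem_oddOddDenominators hc hbad (w := max (v n : ℝ) W)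
    (hW1.trans (le_max_right _ _)) (by
      rw [← div_le_iff₀ hα]; exact (le_max_right _ _).trans (le_max_right _ _))
  obtain ⟨m, rfl⟩ : b ∈ Set.range v := hrange ▸ hb
  have hnm : n < m := hmono.lt_iff_lt.1 (by exact_mod_cast (le_max_left _ _).trans_lt hvb)
  calc (v (n + 1) : ℝ) ≤ v m := by exact_mod_cast hmono.monotone hnm
    _ ≤ max (v n : ℝ) W / (c / 2) ^ 2 := hbw
    _ ≤ W * v n / (c / 2) ^ 2 := by
        gcongr
        exact max_le (le_mul_of_one_le_left (by linarith) hW1)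
          (le_mul_of_one_le_right (by linarith) hvn)
    _ ≤ max 1 (W / (c / 2) ^ 2) * v n := by
        rw [mul_div_right_comm]
        gcongr
        exact le_max_right _ _
end

section
/- Let α be irrational with continued fraction expansion [a₀; a₁, a₂, …] and convergents p_n/q_n. If for some n ≥ 2 the three consecutive partial quotients a_{n+1}, a_{n+2}, a_{n+3} are all equal to the same odd positive integer, then at least one of the convergents p_n/q_n, p_{n+1}/q_{n+1}, p_{n+2}/q_{n+2} has both numerator and denominator odd. -/
lemma cf_det (α : ℝ) : ∀ k : ℕ,
    cfP α (k + 1) * cfQ α k - cfP α k * cfQ α (k + 1) = (-1 : ℤ) ^ k := by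
  intro k
  induction k with
  | zero => simp [cfP, cfQ]
  | succ k ih =>
    show cfP α (k + 2) * cfQ α (k + 1) - cfP α (k + 1) * cfQ α (k + 2) = _
    rw [show cfP α (k + 2) = cfA α (k + 2) * cfP α (k + 1) + cfP α k from rfl,
        show cfQ α (k + 2) = cfA α (k + 2) * cfQ α (k + 1) + cfQ α k from rfl]
    rw [pow_succ, ← ih]
    ring

lemma odd_iff_zmod2 (x : ℤ) : Odd x ↔ (x : ZMod 2) = 1 := by
  constructor
  · rintro ⟨k, rfl⟩
    push_cast
    have : (2 : ZMod 2) = 0 := by decide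
    rw [this]; ring
  · intro h
    rcases Int.even_or_odd x with he | ho
    · exfalso
      obtain ⟨k, rfl⟩ := he
      push_cast at h
      rw [← two_mul, show (2 : ZMod 2) = 0 by decide, zero_mul] at h
      exact absurd h (by decide)
    · exact ho

lemma zmod2_key (p0 q0 p1 q1 : ZMod 2) (hd : p1 * q0 - p0 * q1 = 1) :
    (p0 = 1 ∧ q0 = 1) ∨ (p1 = 1 ∧ q1 = 1) ∨ (p1 + p0 = 1 ∧ q1 + q0 = 1) := by
  revert hd; revert p0 q0 p1 q1; decide

/-- If three consecutive partial quotients `a (n+1), a (n+2), a (n+3)` of an irrational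
`α` are all equal to the same odd positive integer, then one of the convergents
`p n / q n`, `p (n+1) / q (n+1)`, `p (n+2) / q (n+2)` is of the shape odd/odd. -/
theorem oddOdd_convergent_of_equal_odd_quotients (α : ℝ) (hα : Irrational α) (n : ℕ)
    (hn : 2 ≤ n) (hodd : Odd (cfA α (n + 1))) (hpos : 0 < cfA α (n + 1))
    (h1 : cfA α (n + 2) = cfA α (n + 1)) (h2 : cfA α (n + 3) = cfA α (n + 1)) :
    (Odd (cfP α n) ∧ Odd (cfQ α n)) ∨
      (Odd (cfP α (n + 1)) ∧ Odd (cfQ α (n + 1))) ∨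
        (Odd (cfP α (n + 2)) ∧ Odd (cfQ α (n + 2))) := by
  have ha : ((cfA α (n + 2) : ZMod 2)) = 1 := by
    rw [← odd_iff_zmod2, h1]; exact hodd
  have hd : ((cfP α (n + 1) : ZMod 2)) * (cfQ α n : ZMod 2)
      - (cfP α n : ZMod 2) * (cfQ α (n + 1) : ZMod 2) = 1 := by
    have := cf_det α n
    have : ((cfP α (n + 1) * cfQ α n - cfP α n * cfQ α (n + 1) : ℤ) : ZMod 2)
        = (((-1 : ℤ) ^ n : ℤ) : ZMod 2) := by rw [this]
    push_cast at this
    rw [this]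
    have : (-1 : ZMod 2) = 1 := by decide
    rw [this, one_pow]
  have hp2 : ((cfP α (n + 2) : ZMod 2)) = (cfP α (n + 1) : ZMod 2) + (cfP α n : ZMod 2) := by
    rw [show cfP α (n + 2) = cfA α (n + 2) * cfP α (n + 1) + cfP α n from rfl]
    push_cast
    rw [ha, one_mul]
  have hq2 : ((cfQ α (n + 2) : ZMod 2)) = (cfQ α (n + 1) : ZMod 2) + (cfQ α n : ZMod 2) := by
    rw [show cfQ α (n + 2) = cfA α (n + 2) * cfQ α (n + 1) + cfQ α n from rfl]
    push_cast
    rw [ha, one_mul]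
  rcases zmod2_key (cfP α n) (cfQ α n) (cfP α (n + 1)) (cfQ α (n + 1)) hd with h | h | h
  · exact Or.inl ⟨(odd_iff_zmod2 _).2 h.1, (odd_iff_zmod2 _).2 h.2⟩
  · exact Or.inr (Or.inl ⟨(odd_iff_zmod2 _).2 h.1, (odd_iff_zmod2 _).2 h.2⟩)
  · refine Or.inr (Or.inr ⟨(odd_iff_zmod2 _).2 ?_, (odd_iff_zmod2 _).2 ?_⟩)
    · rw [hp2]; exact h.1
    · rw [hq2]; exact h.2
end
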